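/- arXiv:2502.01997 — 9 statements merged into one kernel-verified Lean document; each statement's English description precedes it below -/
import Mathlib

section
/- Let K_e = {(x¹,x²,x³) ∈ ℝ³ : (x³)² = (x¹)²/a² + (x²)²/b², x³ > 0} with a > b > 0, and for a point x ∈ ℝ³ and a unit vector v set m_{i,j} = xⁱvʲ − xʲvⁱ (i < j), I₁ = m₁₂² + m₁₃² + m₂₃², I₂ = a²m₂₃² + b²m₁₃² − m₁₂². Suppose p₁, p₂, …, p_N ∈ K_e are consecutive reflection points of a billiard trajectory inside K_e, i.e., with v_k = (p_{k+1} − p_k)/‖p_{k+1} − p_k‖, for each interior reflection point the difference v_k − v_{k−1} is orthogonal to the tangent plane of K_e at p_k (and nonzero). Assume the values of the first integrals along the trajectory are I₁ = c₁ > 0 and I₂ = c₂ > 0. Then N ≤ N_{c₁,c₂} := ⌈ π / arcsin( 2ab√(c₁c₂) / (a²(b²+1)c₁ + (b²+1)c₂) ) ⌉. -/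
open Real
open scoped RealInnerProductSpace

noncomputable section

/-- The elliptic cone `(x³)² = (x¹)²/a² + (x²)²/b²`, `x³ > 0`. -/
def Ke (a b : ℝ) : Set (EuclideanSpace ℝ (Fin 3)) :=
  {x | (x 2) ^ 2 = (x 0) ^ 2 / a ^ 2 + (x 1) ^ 2 / b ^ 2 ∧ 0 < x 2}

/-- The tangent plane to the cone `Ke a b` at a point `p`: the vectors orthogonal to the
gradient of the defining function `(x¹)²/a² + (x²)²/b² - (x³)²`. -/
def tangentKe (a b : ℝ) (p : EuclideanSpace ℝ (Fin 3)) : Set (EuclideanSpace ℝ (Fin 3)) :=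
  {u | u 0 * p 0 / a ^ 2 + u 1 * p 1 / b ^ 2 - u 2 * p 2 = 0}

def m12 (x v : EuclideanSpace ℝ (Fin 3)) : ℝ := x 0 * v 1 - x 1 * v 0
def m13 (x v : EuclideanSpace ℝ (Fin 3)) : ℝ := x 0 * v 2 - x 2 * v 0
def m23 (x v : EuclideanSpace ℝ (Fin 3)) : ℝ := x 1 * v 2 - x 2 * v 1

def I1 (x v : EuclideanSpace ℝ (Fin 3)) : ℝ := m12 x v ^ 2 + m13 x v ^ 2 + m23 x v ^ 2

def I2 (a b : ℝ) (x v : EuclideanSpace ℝ (Fin 3)) : ℝ :=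
  a ^ 2 * m23 x v ^ 2 + b ^ 2 * m13 x v ^ 2 - m12 x v ^ 2

/-!
Along a segment from `x` to `y` with direction `v`, the angle `∠(x, v)` between the position
vector and the direction drops by the angle `∠xOy` under which the segment is seen from the vertex
(angle sum in the triangle `O x y`). At a reflection point it does not change: the cone is
homogeneous, so `p k` lies in its own tangent plane and the reflection law preserves `⟪p k, v⟫`.
Since `I₁(x, y) = ‖y - x‖² c₁` and `I₂(x, y) = ‖y - x‖² c₂`, an algebraic inequality valid for any
two points of the cone gives `sin ∠xOy ≥ 2ab√(c₁c₂) / (a²(b²+1)c₁ + (b²+1)c₂)`. The angle starts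
below `π` and stays nonnegative, which bounds the number of segments.
-/

open InnerProductGeometry

local notation "E³" => EuclideanSpace ℝ (Fin 3)

lemma inner_eq_fin_three (x y : E³) : ⟪x, y⟫ = x 0 * y 0 + x 1 * y 1 + x 2 * y 2 := by
  simp only [PiLp.inner_apply, Fin.sum_univ_three, RCLike.inner_apply, conj_trivial]
  ring

lemma norm_sq_eq_fin_three (x : E³) : ‖x‖ ^ 2 = x 0 ^ 2 + x 1 ^ 2 + x 2 ^ 2 := by
  rw [← real_inner_self_eq_norm_sq, inner_eq_fin_three]
  ring

lemma norm_sq_mul_norm_sq_eq_inner_sq_add_I1 (x y : E³) :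
    ‖x‖ ^ 2 * ‖y‖ ^ 2 = ⟪x, y⟫ ^ 2 + I1 x y := by
  rw [norm_sq_eq_fin_three, norm_sq_eq_fin_three, inner_eq_fin_three, I1, m12, m13, m23]
  ring

lemma I1_smul_left (t : ℝ) (x y : E³) : I1 (t • x) y = t ^ 2 * I1 x y := by
  simp only [I1, m12, m13, m23, PiLp.smul_apply, smul_eq_mul]
  ring

lemma I1_smul_right (t : ℝ) (x y : E³) : I1 x (t • y) = t ^ 2 * I1 x y := by
  simp only [I1, m12, m13, m23, PiLp.smul_apply, smul_eq_mul]
  ring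

lemma I1_sub_self_right (x y : E³) : I1 x (y - x) = I1 x y := by
  simp only [I1, m12, m13, m23, PiLp.sub_apply]
  ring

lemma I2_smul_left (a b t : ℝ) (x y : E³) : I2 a b (t • x) y = t ^ 2 * I2 a b x y := by
  simp only [I2, m12, m13, m23, PiLp.smul_apply, smul_eq_mul]
  ring

lemma I2_smul_right (a b t : ℝ) (x y : E³) : I2 a b x (t • y) = t ^ 2 * I2 a b x y := by
  simp only [I2, m12, m13, m23, PiLp.smul_apply, smul_eq_mul]
  ring

lemma I2_sub_self_right (a b : ℝ) (x y : E³) : I2 a b x (y - x) = I2 a b x y := by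
  simp only [I2, m12, m13, m23, PiLp.sub_apply]
  ring

lemma sin_angle_mul_norm_mul_norm_eq_sqrt_I1 (x y : E³) :
    sin (angle x y) * (‖x‖ * ‖y‖) = √(I1 x y) := by
  rw [sin_angle_mul_norm_mul_norm, real_inner_self_eq_norm_sq, real_inner_self_eq_norm_sq,
    norm_sq_mul_norm_sq_eq_inner_sq_add_I1]
  ring_nf

lemma angle_lt_pi_of_I1_pos {x y : E³} (h : 0 < I1 x y) : angle x y < π := by
  refine (angle_le_pi x y).lt_of_ne fun hπ => ?_
  have := sin_angle_mul_norm_mul_norm_eq_sqrt_I1 x y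
  rw [hπ, sin_pi, zero_mul] at this
  exact (sqrt_pos.2 h).ne this

section InnerProductSpace

variable {V : Type*} [NormedAddCommGroup V] [InnerProductSpace ℝ V]

lemma angle_eq_angle_add_angle_of_sub_eq_smul {x y v : V} {t : ℝ} (ht : 0 < t) (hy : y ≠ 0)
    (h : y - x = t • v) : angle x v = angle x y + angle y v := by
  have hsum := angle_add_angle_sub_add_angle_sub_eq_pi x hy
  rw [← neg_sub, h, angle_neg_right, angle_smul_right_of_pos _ _ ht,
    angle_smul_right_of_pos _ _ ht] at hsum
  linarith

lemma angle_eq_angle_of_inner_eq {x u w : V} (hn : ‖u‖ = ‖w‖) (h : ⟪x, u⟫ = ⟪x, w⟫) :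
    angle x u = angle x w := by
  rw [angle, angle, h, hn]

end InnerProductSpace

lemma arcsin_le_of_le_sin {s θ : ℝ} (h0 : 0 ≤ θ) (h : s ≤ sin θ) : arcsin s ≤ θ := by
  rcases lt_or_ge θ (π / 2) with hθ | hθ
  · exact (arcsin_le_iff_le_sin' ⟨by linarith, hθ⟩).2 h
  · exact (arcsin_le_pi_div_two s).trans hθ

/-- With `A = a²`, `B = b²` this is `Ke.four_mul_I2_mul_le_of_apply_two_eq_one` divided by
`(a²k)²`: there `I₁ = k · (2B(A+1) - ABk + 2m)`, `I₂ = ABk²` and `⟪x, y⟫ = (A+1) - k(A+B)/2 - m`. -/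
lemma cone_polynomial_inequality {A B k m : ℝ} (hA : 0 < A) (hB : 0 < B) (hk0 : 0 ≤ k)
    (hk2 : k ≤ 2) (hm : 0 ≤ m) :
    4 * B ^ 2 * (k * (2 * B * (A + 1) - A * B * k + 2 * m) + ((A + 1) - k * (A + B) / 2 - m) ^ 2)
      ≤ (B + 1) ^ 2 * (2 * B * (A + 1) - A * B * k + 2 * m + B * k) ^ 2 := by
  -- expanded in `m`, every coefficient is a polynomial with nonnegative coefficients in `A`, `B`,
  -- `k` and `u = 2 - k`
  obtain ⟨u, hu, hku⟩ : ∃ u, 0 ≤ u ∧ u = 2 - k := ⟨2 - k, by linarith, rfl⟩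
  rw [← sub_nonneg]
  convert_to 0 ≤ 4 * (2 * B + 1) * m ^ 2
    + 4 * B * (u * A * (1 + 3 * B + B ^ 2) + (2 + k) + 6 * B + 2 * B ^ 2) * m
    + B ^ 2 * (k * (4 + k + 2 * A * u)
      + 2 * B * ((u * A) ^ 2 + u * A * (4 + k) + (u - 3) ^ 2 + 3)
      + B ^ 2 * (4 + 4 * k + (u * A) ^ 2 + 2 * u * A * (2 + k)))
  · subst hku; ring
  positivity

lemma Ke.exists_of_apply_two_eq_one {a b : ℝ} (ha : a ≠ 0) (hb : b ≠ 0) {x : E³}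
    (hx : x ∈ Ke a b) (h2 : x 2 = 1) : ∃ p q, x 0 = a * p ∧ x 1 = b * q ∧ p ^ 2 + q ^ 2 = 1 := by
  refine ⟨x 0 / a, x 1 / b, by field_simp, by field_simp, ?_⟩
  rw [div_pow, div_pow, ← hx.1, h2, one_pow]

/-- Writing `x = (ap, bq, 1)`, `y = (ar, bs, 1)` with `p² + q² = r² + s² = 1`, one has
`I₂(x, y) = a²b²k²` for `k = 1 - (pr + qs)`, and `m = (a² - b²)(p - r)² / (2k) ≥ 0` is where
`b ≤ a` enters. -/
lemma Ke.four_mul_I2_mul_le_of_apply_two_eq_one {a b : ℝ} (hb : 0 < b) (hba : b ≤ a)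
    {x y : E³} (hx : x ∈ Ke a b) (hy : y ∈ Ke a b) (hx2 : x 2 = 1) (hy2 : y 2 = 1) :
    4 * a ^ 2 * b ^ 2 * I2 a b x y * (‖x‖ ^ 2 * ‖y‖ ^ 2)
      ≤ (a ^ 2 * (b ^ 2 + 1) * I1 x y + (b ^ 2 + 1) * I2 a b x y) ^ 2 := by
  have ha : 0 < a := hb.trans_le hba
  obtain ⟨p, q, hx0, hx1, hpq⟩ := Ke.exists_of_apply_two_eq_one ha.ne' hb.ne' hx hx2
  obtain ⟨r, s, hy0, hy1, hrs⟩ := Ke.exists_of_apply_two_eq_one ha.ne' hb.ne' hy hy2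
  set k := 1 - (p * r + q * s)
  have hI2 : I2 a b x y = a ^ 2 * b ^ 2 * k ^ 2 := by
    rw [I2, m12, m13, m23, hx0, hx1, hx2, hy0, hy1, hy2]
    linear_combination (a ^ 2 * b ^ 2 * (1 - r ^ 2 - s ^ 2)) * hpq
  rcases eq_or_ne k 0 with hk0 | hk0
  · rw [hI2, hk0]
    simpa using sq_nonneg _
  have hk_two : 2 * k = (p - r) ^ 2 + (q - s) ^ 2 := by linear_combination -hpq - hrs
  have hk_pos : 0 < k := by
    refine lt_of_le_of_ne ?_ hk0.symm
    nlinarith [sq_nonneg (p - r), sq_nonneg (q - s)]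
  have hk_le : k ≤ 2 := by
    have : 2 * (2 - k) = (p + r) ^ 2 + (q + s) ^ 2 := by linear_combination -hpq - hrs
    nlinarith [sq_nonneg (p + r), sq_nonneg (q + s)]
  set m := (a ^ 2 - b ^ 2) * (p - r) ^ 2 / (2 * k) with hm
  have hm_nonneg : 0 ≤ m := by
    have : 0 ≤ a ^ 2 - b ^ 2 := by nlinarith
    positivity
  have hkm : 2 * k * m = (a ^ 2 - b ^ 2) * (p - r) ^ 2 := by
    rw [hm]; field_simp
  have hI1 : I1 x y = k * (2 * b ^ 2 * (a ^ 2 + 1) - a ^ 2 * b ^ 2 * k + 2 * m) := by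
    rw [I1, m12, m13, m23, hx0, hx1, hx2, hy0, hy1, hy2]
    linear_combination (-1) * hkm + (a ^ 2 * b ^ 2 * (r ^ 2 + s ^ 2) + b ^ 2) * hpq
      + (a ^ 2 * b ^ 2 + b ^ 2) * hrs
  have hW : ⟪x, y⟫ = (a ^ 2 + 1) - k * (a ^ 2 + b ^ 2) / 2 - m := by
    refine mul_left_cancel₀ (mul_ne_zero two_ne_zero hk0) ?_
    rw [inner_eq_fin_three, hx0, hx1, hx2, hy0, hy1, hy2]
    linear_combination hkm + s ^ 2 * (a ^ 2 - b ^ 2) * hpq + (a ^ 2 - b ^ 2) * (1 - p ^ 2) * hrs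
  rw [norm_sq_mul_norm_sq_eq_inner_sq_add_I1, hI1, hI2, hW]
  linear_combination (a ^ 2 * k) ^ 2 *
    cone_polynomial_inequality (pow_pos ha 2) (pow_pos hb 2) hk_pos.le hk_le hm_nonneg

lemma Ke.smul_mem {a b t : ℝ} (ht : 0 < t) {x : E³} (hx : x ∈ Ke a b) : t • x ∈ Ke a b := by
  simp only [Ke, Set.mem_ofPred_eq, PiLp.smul_apply, smul_eq_mul, mul_pow]
  exact ⟨by rw [hx.1]; ring, mul_pos ht hx.2⟩

lemma Ke.exists_eq_smul {a b : ℝ} {x : E³} (hx : x ∈ Ke a b) :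
    ∃ t : ℝ, 0 < t ∧ ∃ x' ∈ Ke a b, x' 2 = 1 ∧ x = t • x' :=
  ⟨x 2, hx.2, (x 2)⁻¹ • x, Ke.smul_mem (inv_pos.2 hx.2) hx, by simp [hx.2.ne'],
    (smul_inv_smul₀ hx.2.ne' x).symm⟩

lemma Ke.ne_zero {a b : ℝ} {x : E³} (hx : x ∈ Ke a b) : x ≠ 0 := by
  rintro rfl
  exact lt_irrefl _ hx.2

lemma Ke.mem_tangentKe_self {a b : ℝ} {x : E³} (hx : x ∈ Ke a b) : x ∈ tangentKe a b x := by
  simp only [tangentKe, Set.mem_ofPred_eq]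
  linear_combination -hx.1

lemma Ke.four_mul_I2_mul_le {a b : ℝ} (hb : 0 < b) (hba : b ≤ a) {x y : E³}
    (hx : x ∈ Ke a b) (hy : y ∈ Ke a b) :
    4 * a ^ 2 * b ^ 2 * I2 a b x y * (‖x‖ ^ 2 * ‖y‖ ^ 2)
      ≤ (a ^ 2 * (b ^ 2 + 1) * I1 x y + (b ^ 2 + 1) * I2 a b x y) ^ 2 := by
  obtain ⟨s, -, x, hx₁, hx₂, rfl⟩ := Ke.exists_eq_smul hx
  obtain ⟨t, -, y, hy₁, hy₂, rfl⟩ := Ke.exists_eq_smul hy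
  rw [I1_smul_left, I1_smul_right, I2_smul_left, I2_smul_right, norm_smul, norm_smul,
    Real.norm_eq_abs, Real.norm_eq_abs, mul_pow, mul_pow, sq_abs, sq_abs]
  linear_combination (s ^ 2 * t ^ 2) ^ 2 *
    Ke.four_mul_I2_mul_le_of_apply_two_eq_one hb hba hx₁ hy₁ hx₂ hy₂

lemma Ke.angle_le_angle_sub_arcsin {a b c₁ c₂ : ℝ} (hb : 0 < b) (hba : b ≤ a) (hc₁ : 0 < c₁)
    (hc₂ : 0 < c₂) {x y v : E³} (hx : x ∈ Ke a b) (hy : y ∈ Ke a b) (hxy : y ≠ x)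
    (hv : v = ‖y - x‖⁻¹ • (y - x)) (h1 : I1 x v = c₁) (h2 : I2 a b x v = c₂) :
    angle y v ≤ angle x v -
      arcsin (2 * a * b * √(c₁ * c₂) / (a ^ 2 * (b ^ 2 + 1) * c₁ + (b ^ 2 + 1) * c₂)) := by
  have ha : 0 < a := hb.trans_le hba
  set T := ‖y - x‖
  have hT : 0 < T := norm_pos_iff.2 (sub_ne_zero.2 hxy)
  have hyx : y - x = T • v := by rw [hv, smul_inv_smul₀ hT.ne']
  have hI1 : I1 x y = T ^ 2 * c₁ := by rw [← I1_sub_self_right, hyx, I1_smul_right, h1]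
  have hI2 : I2 a b x y = T ^ 2 * c₂ := by rw [← I2_sub_self_right, hyx, I2_smul_right, h2]
  have hxy_pos : 0 < ‖x‖ * ‖y‖ :=
    mul_pos (norm_pos_iff.2 (Ke.ne_zero hx)) (norm_pos_iff.2 (Ke.ne_zero hy))
  set D := a ^ 2 * (b ^ 2 + 1) * c₁ + (b ^ 2 + 1) * c₂
  have hD : 0 < D := by positivity
  have hbound : 2 * a * b * √c₂ * (‖x‖ * ‖y‖) ≤ D * T := by
    have key := Ke.four_mul_I2_mul_le hb hba hx hy
    rw [hI1, hI2] at key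
    refine (pow_le_pow_iff_left₀ (by positivity) (by positivity) two_ne_zero).1 ?_
    refine le_of_mul_le_mul_right ?_ (pow_pos hT 2)
    calc (2 * a * b * √c₂ * (‖x‖ * ‖y‖)) ^ 2 * T ^ 2
        = 4 * a ^ 2 * b ^ 2 * (T ^ 2 * c₂) * (‖x‖ ^ 2 * ‖y‖ ^ 2) := by
          rw [mul_pow, mul_pow, sq_sqrt hc₂.le]; ring
      _ ≤ _ := key
      _ = (D * T) ^ 2 * T ^ 2 := by ring
  have hsin : 2 * a * b * √(c₁ * c₂) / D ≤ sin (angle x y) := by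
    refine le_of_mul_le_mul_right ?_ hxy_pos
    rw [sin_angle_mul_norm_mul_norm_eq_sqrt_I1, hI1, sqrt_mul (sq_nonneg T), sqrt_sq hT.le,
      sqrt_mul hc₁.le, div_mul_eq_mul_div, div_le_iff₀ hD]
    calc 2 * a * b * (√c₁ * √c₂) * (‖x‖ * ‖y‖)
        = √c₁ * (2 * a * b * √c₂ * (‖x‖ * ‖y‖)) := by ring
      _ ≤ √c₁ * (D * T) := mul_le_mul_of_nonneg_left hbound (sqrt_nonneg c₁)
      _ = T * √c₁ * D := by ring
  have hsplit := angle_eq_angle_add_angle_of_sub_eq_smul hT (Ke.ne_zero hy) hyx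
  linarith [arcsin_le_of_le_sin (angle_nonneg x y) hsin]

lemma le_ceil_div_of_le_sub {θ : ℕ → ℝ} {c δ : ℝ} {N : ℕ} (hδ : 0 < δ) (h1 : θ 1 < c)
    (hN : 0 ≤ θ N) (hstep : ∀ k, 1 ≤ k → k < N → θ (k + 1) ≤ θ k - δ) : N ≤ ⌈c / δ⌉₊ := by
  rcases Nat.eq_zero_or_pos N with rfl | hN1
  · exact Nat.zero_le _
  have hiter : ∀ k, 1 ≤ k → k ≤ N → θ k ≤ θ 1 - ((k : ℝ) - 1) * δ := by
    intro k hk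
    induction k, hk using Nat.le_induction with
    | base => simp
    | succ k hk ih =>
      intro hkN
      have := hstep k hk hkN
      push_cast
      linarith [ih (by omega)]
  have hlt : ((N : ℝ) - 1) * δ < c := by linarith [hiter N hN1 le_rfl]
  have : (N : ℝ) < ⌈c / δ⌉₊ + 1 := by
    linarith [Nat.le_ceil (c / δ), (lt_div_iff₀ hδ).2 hlt]
  exact_mod_cast Nat.lt_succ_iff.1 (by exact_mod_cast this)

/-- The number of reflections of a billiard trajectory inside the elliptic cone with fixed
positive values `c₁, c₂` of the first integrals `I₁, I₂` is bounded by
`⌈π / arcsin (2ab√(c₁c₂) / (a²(b²+1)c₁ + (b²+1)c₂))⌉`. -/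
theorem stmt_0 (a b c₁ c₂ : ℝ) (hab : b < a) (hb : 0 < b) (hc₁ : 0 < c₁) (hc₂ : 0 < c₂)
    (N : ℕ) (p v : ℕ → EuclideanSpace ℝ (Fin 3))
    -- the reflection points `p 1, …, p N` lie on the cone
    (hmem : ∀ k, 1 ≤ k → k ≤ N → p k ∈ Ke a b)
    -- consecutive reflection points are distinct
    (hne : ∀ k, 1 ≤ k → k < N → p (k + 1) ≠ p k)
    -- `v k` is the unit direction of the `k`-th segment
    (hv : ∀ k, v k = ‖p (k + 1) - p k‖⁻¹ • (p (k + 1) - p k))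
    -- billiard reflection law at every interior reflection point
    (hrefl : ∀ k, 2 ≤ k → k < N → v k - v (k - 1) ≠ 0 ∧
      ∀ u ∈ tangentKe a b (p k), ⟪v k - v (k - 1), u⟫ = 0)
    -- the values of the first integrals along the trajectory
    (hI1 : ∀ k, 1 ≤ k → k < N → I1 (p k) (v k) = c₁)
    (hI2 : ∀ k, 1 ≤ k → k < N → I2 a b (p k) (v k) = c₂) :
    N ≤ ⌈π / Real.arcsin (2 * a * b * Real.sqrt (c₁ * c₂) /
          (a ^ 2 * (b ^ 2 + 1) * c₁ + (b ^ 2 + 1) * c₂))⌉₊ := by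
  have hδ :
      0 < arcsin (2 * a * b * √(c₁ * c₂) / (a ^ 2 * (b ^ 2 + 1) * c₁ + (b ^ 2 + 1) * c₂)) :=
    arcsin_pos.2 (by have := hb.trans hab; positivity)
  rcases Nat.lt_or_ge N 2 with hN | hN
  · exact (by omega : N ≤ 1).trans (Nat.one_le_ceil_iff.2 (by positivity))
  have hunit : ∀ k, 1 ≤ k → k < N → ‖v k‖ = 1 := fun k hk hkN => by
    rw [hv k]; exact norm_smul_inv_norm (sub_ne_zero.2 (hne k hk hkN))
  have hreflect : ∀ k, 2 ≤ k → k < N → angle (p k) (v k) = angle (p k) (v (k - 1)) := by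
    intro k hk hkN
    refine angle_eq_angle_of_inner_eq
      (by rw [hunit k (by omega) hkN, hunit (k - 1) (by omega) (by omega)]) ?_
    have := (hrefl k hk hkN).2 _ (Ke.mem_tangentKe_self (hmem k (by omega) hkN.le))
    rw [inner_sub_left, real_inner_comm, real_inner_comm (p k)] at this
    linarith
  -- the angle between `p k` and the outgoing direction, and the incoming one at the last point
  refine le_ceil_div_of_le_sub (θ := fun k => angle (p k) (v (min k (N - 1)))) hδ ?_
    (angle_nonneg _ _) fun k hk hkN => ?_
  · rw [show min 1 (N - 1) = 1 by omega]
    exact angle_lt_pi_of_I1_pos ((hI1 1 le_rfl (by omega)).symm ▸ hc₁)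
  · have harrive : angle (p (k + 1)) (v (min (k + 1) (N - 1))) = angle (p (k + 1)) (v k) := by
      rcases Nat.lt_or_ge (k + 1) (N - 1 + 1) with h | h
      · rw [min_eq_left (by omega), hreflect (k + 1) (by omega) (by omega), Nat.add_sub_cancel]
      · rw [min_eq_right (by omega), show N - 1 = k by omega]
    simp only [harrive, min_eq_left (show k ≤ N - 1 by omega)]
    exact Ke.angle_le_angle_sub_arcsin hb hab.le hc₁ hc₂ (hmem k hk hkN.le)
      (hmem (k + 1) (by omega) hkN) (hne k hk hkN) (hv k) (hI1 k hk hkN) (hI2 k hk hkN)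
end
end

section
/- Let K_e = {(x¹,x²,x³) ∈ ℝ³ : (x³)² = (x¹)²/a² + (x²)²/b², x³ > 0} with a > b > 0. Let p ∈ K_e, let n be a unit normal vector to K_e at p, let v be a unit vector, and let v' = v − 2⟨v,n⟩n be its billiard reflection at p. Then I₂(p, v') = I₂(p, v), where I₂(x, v) = a²(x²v³ − x³v²)² + b²(x¹v³ − x³v¹)² − (x¹v² − x²v¹)². Consequently, since I₂(x, v) is also constant in x along any line with direction v, I₂ is a first integral of the Birkhoff billiard inside K_e. -/
/-!
Since `x ⨯₃ v = (m₂₃, -m₁₃, m₁₂)`, `I₂(x, v)` is the diagonal form `D = diag(a², b², -1)` evaluated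
on `x ⨯₃ v`, and `K_e` lies in the isotropic cone `⟨N, p⟩ = 0` of the dual form, where `N = D⁻¹p`
is the normal at `p`. The cofactor identity `D (p ⨯₃ v) = det D · (N ⨯₃ D⁻¹v)` and Lagrange's
identity give `I₂(p, v) = -det D · ⟨v, N⟩² = a²b² ⟨v, N⟩²` on the cone, and the billiard
reflection only changes the sign of `⟨v, N⟩`. Translating `x` along `v` does not change `x ⨯₃ v`.
-/

open Real
open scoped RealInnerProductSpace

noncomputable section

open Matrix WithLp

def crossForm (d x v : Fin 3 → ℝ) : ℝ := (d * (x ⨯₃ v)) ⬝ᵥ (x ⨯₃ v)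

theorem crossForm_add_smul (d x w : Fin 3 → ℝ) (t : ℝ) :
    crossForm d (x + t • w) w = crossForm d x w := by
  simp only [crossForm, map_add, map_smul, LinearMap.add_apply, LinearMap.smul_apply, cross_self,
    smul_zero, add_zero]

theorem crossForm_mul_of_isotropic {d N : Fin 3 → ℝ} (hN : d ⬝ᵥ (N * N) = 0) (v : Fin 3 → ℝ) :
    crossForm d (d * N) v = -(d 0 * d 1 * d 2) * (v ⬝ᵥ N) ^ 2 := by
  simp only [crossForm, cross_apply, dotProduct, Fin.sum_univ_three, Pi.mul_apply, cons_val_zero,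
    cons_val_one, cons_val] at hN ⊢
  -- the coefficient is `det D · ⟨D⁻¹v, v⟩` for `D = diag d`
  linear_combination (d 1 * d 2 * v 0 ^ 2 + d 0 * d 2 * v 1 ^ 2 + d 0 * d 1 * v 2 ^ 2) * hN

theorem exists_smul_eq_of_inner_eq_zero {E : Type*} [NormedAddCommGroup E] [InnerProductSpace ℝ E]
    {N n : E} (h : ∀ u, ⟪N, u⟫ = 0 → ⟪n, u⟫ = 0) : ∃ c : ℝ, c • N = n := by
  have hn : n ∈ (ℝ ∙ N)ᗮᗮ := by
    rw [Submodule.mem_orthogonal']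
    intro u hu
    exact h u (Submodule.mem_orthogonal_singleton_iff_inner_right.mp hu)
  rw [Submodule.orthogonal_orthogonal] at hn
  exact Submodule.mem_span_singleton.mp hn

theorem inner_reflect_smul_left {E : Type*} [NormedAddCommGroup E] [InnerProductSpace ℝ E]
    {N : E} {c : ℝ} (hn : ‖c • N‖ = 1) (v : E) :
    ⟪v - (2 * ⟪v, c • N⟫) • c • N, N⟫ = -⟪v, N⟫ := by
  have hnn : ⟪c • N, c • N⟫ = 1 := by rw [real_inner_self_eq_norm_sq, hn, one_pow]
  simp only [inner_sub_left, inner_smul_left, inner_smul_right, RCLike.conj_to_real] at hnn ⊢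
  linear_combination (-2 * ⟪v, N⟫) * hnn

theorem real_inner_eq_dotProduct {ι : Type*} [Fintype ι] (x y : EuclideanSpace ℝ ι) :
    ⟪x, y⟫ = ofLp x ⬝ᵥ ofLp y := by
  rw [EuclideanSpace.inner_eq_star_dotProduct, star_trivial, dotProduct_comm]

theorem I2_eq_crossForm (a b : ℝ) (x v : EuclideanSpace ℝ (Fin 3)) :
    I2 a b x v = crossForm ![a ^ 2, b ^ 2, -1] (ofLp x) (ofLp v) := by
  simp only [I2, m12, m13, m23, crossForm, cross_apply, dotProduct, Fin.sum_univ_three,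
    Pi.mul_apply, cons_val_zero, cons_val_one, cons_val]
  ring

def coneNormal (a b : ℝ) (p : EuclideanSpace ℝ (Fin 3)) : EuclideanSpace ℝ (Fin 3) :=
  !₂[p 0 / a ^ 2, p 1 / b ^ 2, -p 2]

theorem mem_tangentKe_iff {a b : ℝ} {p u : EuclideanSpace ℝ (Fin 3)} :
    u ∈ tangentKe a b p ↔ ⟪coneNormal a b p, u⟫ = 0 := by
  rw [real_inner_eq_dotProduct]
  simp only [tangentKe, coneNormal, Set.mem_ofPred_eq, dotProduct, Fin.sum_univ_three, cons_val_zero,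
    cons_val_one, cons_val]
  constructor <;> intro h <;> linear_combination h

theorem ofLp_eq_mul_coneNormal {a b : ℝ} (ha : a ≠ 0) (hb : b ≠ 0) (p : EuclideanSpace ℝ (Fin 3)) :
    ofLp p = ![a ^ 2, b ^ 2, -1] * ofLp (coneNormal a b p) := by
  ext i
  fin_cases i <;> simp [coneNormal, ha, hb, mul_div_cancel₀]

theorem coneNormal_isotropic {a b : ℝ} (ha : a ≠ 0) (hb : b ≠ 0) {p : EuclideanSpace ℝ (Fin 3)}
    (hp : p ∈ Ke a b) :
    ![a ^ 2, b ^ 2, -1] ⬝ᵥ (ofLp (coneNormal a b p) * ofLp (coneNormal a b p)) = 0 := by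
  obtain ⟨hcone, -⟩ := hp
  simp only [coneNormal, dotProduct, Fin.sum_univ_three, Pi.mul_apply, cons_val_zero,
    cons_val_one, cons_val]
  field_simp at hcone ⊢
  linear_combination -hcone

theorem I2_eq_inner_coneNormal_sq {a b : ℝ} (ha : a ≠ 0) (hb : b ≠ 0) {p : EuclideanSpace ℝ (Fin 3)}
    (hp : p ∈ Ke a b) (v : EuclideanSpace ℝ (Fin 3)) :
    I2 a b p v = a ^ 2 * b ^ 2 * ⟪v, coneNormal a b p⟫ ^ 2 := by
  rw [I2_eq_crossForm, ofLp_eq_mul_coneNormal ha hb,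
    crossForm_mul_of_isotropic (coneNormal_isotropic ha hb hp), real_inner_eq_dotProduct]
  simp only [cons_val_zero, cons_val_one, cons_val]
  ring

theorem stmt_2_general (a b : ℝ) (hab : b < a) (hb : 0 < b)
    (p n v v' : EuclideanSpace ℝ (Fin 3)) (hp : p ∈ Ke a b)
    (hn1 : ‖n‖ = 1) (hn2 : ∀ u ∈ tangentKe a b p, ⟪n, u⟫ = 0)
    (hv' : v' = v - (2 * ⟪v, n⟫) • n) :
    I2 a b p v' = I2 a b p v ∧
      ∀ (x w : EuclideanSpace ℝ (Fin 3)) (t : ℝ), I2 a b (x + t • w) w = I2 a b x w := by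
  have ha : a ≠ 0 := (hb.trans hab).ne'
  obtain ⟨c, rfl⟩ := exists_smul_eq_of_inner_eq_zero fun u hu ↦ hn2 u (mem_tangentKe_iff.mpr hu)
  refine ⟨?_, fun x w t ↦ ?_⟩
  · rw [I2_eq_inner_coneNormal_sq ha hb.ne' hp, I2_eq_inner_coneNormal_sq ha hb.ne' hp, hv',
      inner_reflect_smul_left hn1, neg_sq]
  · rw [I2_eq_crossForm, I2_eq_crossForm, ofLp_add, ofLp_smul]
    exact crossForm_add_smul _ _ _ _

/-- The billiard reflection at a point of the elliptic cone preserves `I₂`; moreover `I₂` is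
constant in `x` along any line, so `I₂` is a first integral of the billiard inside `K_e`. -/
theorem stmt_2 (a b : ℝ) (hab : b < a) (hb : 0 < b)
    (p n v v' : EuclideanSpace ℝ (Fin 3)) (hp : p ∈ Ke a b)
    (hn1 : ‖n‖ = 1) (hn2 : ∀ u ∈ tangentKe a b p, ⟪n, u⟫ = 0)
    (hv : ‖v‖ = 1) (hv' : v' = v - (2 * ⟪v, n⟫) • n) :
    I2 a b p v' = I2 a b p v ∧
      ∀ (x w : EuclideanSpace ℝ (Fin 3)) (t : ℝ), I2 a b (x + t • w) w = I2 a b x w :=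
  stmt_2_general a b hab hb p n v v' hp hn1 hn2 hv'
end
end

section
/- Let a, b > 0 and on ℝ³ × ℝ³ with coordinates (x¹,x²,x³,v¹,v²,v³) define m_{i,j} = xⁱvʲ − xʲvⁱ (i < j), I₁ = m₁₂² + m₁₃² + m₂₃², and I₂ = a²m₂₃² + b²m₁₃² − m₁₂². Then the canonical Poisson bracket of I₁ and I₂ vanishes identically: {I₁, I₂} = Σ_{k=1}^{3} ( (∂I₁/∂xᵏ)(∂I₂/∂vᵏ) − (∂I₁/∂vᵏ)(∂I₂/∂xᵏ) ) = 0. -/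
open Real

noncomputable section

/-- Partial derivative of `F : (x, v) ↦ F x v` with respect to `xᵏ` at `(x, v)`. -/
def pderivX (F : (Fin 3 → ℝ) → (Fin 3 → ℝ) → ℝ) (k : Fin 3) (x v : Fin 3 → ℝ) : ℝ :=
  deriv (fun s => F (Function.update x k s) v) (x k)

/-- Partial derivative of `F : (x, v) ↦ F x v` with respect to `vᵏ` at `(x, v)`. -/
def pderivV (F : (Fin 3 → ℝ) → (Fin 3 → ℝ) → ℝ) (k : Fin 3) (x v : Fin 3 → ℝ) : ℝ :=
  deriv (fun s => F x (Function.update v k s)) (v k)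


lemma dquad (c1 c2 c3 p1 q1 p2 q2 p3 q3 t : ℝ) :
    deriv (fun s => c1*(p1*s+q1)^2 + c2*(p2*s+q2)^2 + c3*(p3*s+q3)^2) t =
      2*(c1*p1*(p1*t+q1) + c2*p2*(p2*t+q2) + c3*p3*(p3*t+q3)) := by
  have hl : ∀ p q : ℝ, HasDerivAt (fun s : ℝ => p*s+q) p t := fun p q => by
    simpa using ((hasDerivAt_id t).const_mul p).add_const q
  have H : HasDerivAt (fun s => c1*(p1*s+q1)^2 + c2*(p2*s+q2)^2 + c3*(p3*s+q3)^2)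
      (c1*(2*(p1*t+q1)^1*p1) + c2*(2*(p2*t+q2)^1*p2) + c3*(2*(p3*t+q3)^1*p3)) t := by
    exact ((((hl p1 q1).pow 2).const_mul c1).add (((hl p2 q2).pow 2).const_mul c2)).add
      (((hl p3 q3).pow 2).const_mul c3)
  rw [H.deriv]; ring

/-- The canonical Poisson bracket of the two first integrals `I₁` and `I₂` of the billiard
inside the elliptic cone vanishes identically. -/
theorem stmt_3 (a b : ℝ) (ha : 0 < a) (hb : 0 < b)
    (I1 I2 : (Fin 3 → ℝ) → (Fin 3 → ℝ) → ℝ)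
    (hI1 : ∀ x v : Fin 3 → ℝ, I1 x v =
      (x 0 * v 1 - x 1 * v 0) ^ 2 + (x 0 * v 2 - x 2 * v 0) ^ 2 +
        (x 1 * v 2 - x 2 * v 1) ^ 2)
    (hI2 : ∀ x v : Fin 3 → ℝ, I2 x v =
      a ^ 2 * (x 1 * v 2 - x 2 * v 1) ^ 2 + b ^ 2 * (x 0 * v 2 - x 2 * v 0) ^ 2 -
        (x 0 * v 1 - x 1 * v 0) ^ 2)
    (x v : Fin 3 → ℝ) :
    ∑ k : Fin 3,
      (pderivX I1 k x v * pderivV I2 k x v - pderivV I1 k x v * pderivX I2 k x v) = 0 := by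
  have eI1x0 : (fun s => I1 (Function.update x 0 s) v) = (fun s => (1:ℝ)*((v 1)*s+(-(x 1*v 0)))^2 + (1:ℝ)*((v 2)*s+(-(x 2*v 0)))^2 + (1:ℝ)*((0:ℝ)*s+(x 1*v 2 - x 2*v 1))^2) := by
    funext s; simp [hI1, Function.update]; ring
  have hI1x0 := eI1x0 ▸ dquad (1:ℝ) (1:ℝ) (1:ℝ) (v 1) (-(x 1*v 0)) (v 2) (-(x 2*v 0)) (0:ℝ) (x 1*v 2 - x 2*v 1) (x 0)
  have eI1x1 : (fun s => I1 (Function.update x 1 s) v) = (fun s => (1:ℝ)*((-(v 0))*s+(x 0*v 1))^2 + (1:ℝ)*((0:ℝ)*s+(x 0*v 2 - x 2*v 0))^2 + (1:ℝ)*((v 2)*s+(-(x 2*v 1)))^2) := by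
    funext s; simp [hI1, Function.update]; ring
  have hI1x1 := eI1x1 ▸ dquad (1:ℝ) (1:ℝ) (1:ℝ) (-(v 0)) (x 0*v 1) (0:ℝ) (x 0*v 2 - x 2*v 0) (v 2) (-(x 2*v 1)) (x 1)
  have eI1x2 : (fun s => I1 (Function.update x 2 s) v) = (fun s => (1:ℝ)*((0:ℝ)*s+(x 0*v 1 - x 1*v 0))^2 + (1:ℝ)*((-(v 0))*s+(x 0*v 2))^2 + (1:ℝ)*((-(v 1))*s+(x 1*v 2))^2) := by
    funext s; simp [hI1, Function.update]; ring
  have hI1x2 := eI1x2 ▸ dquad (1:ℝ) (1:ℝ) (1:ℝ) (0:ℝ) (x 0*v 1 - x 1*v 0) (-(v 0)) (x 0*v 2) (-(v 1)) (x 1*v 2) (x 2)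
  have eI1v0 : (fun s => I1 x (Function.update v 0 s)) = (fun s => (1:ℝ)*((-(x 1))*s+(x 0*v 1))^2 + (1:ℝ)*((-(x 2))*s+(x 0*v 2))^2 + (1:ℝ)*((0:ℝ)*s+(x 1*v 2 - x 2*v 1))^2) := by
    funext s; simp [hI1, Function.update]; ring
  have hI1v0 := eI1v0 ▸ dquad (1:ℝ) (1:ℝ) (1:ℝ) (-(x 1)) (x 0*v 1) (-(x 2)) (x 0*v 2) (0:ℝ) (x 1*v 2 - x 2*v 1) (v 0)
  have eI1v1 : (fun s => I1 x (Function.update v 1 s)) = (fun s => (1:ℝ)*((x 0)*s+(-(x 1*v 0)))^2 + (1:ℝ)*((0:ℝ)*s+(x 0*v 2 - x 2*v 0))^2 + (1:ℝ)*((-(x 2))*s+(x 1*v 2))^2) := by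
    funext s; simp [hI1, Function.update]; ring
  have hI1v1 := eI1v1 ▸ dquad (1:ℝ) (1:ℝ) (1:ℝ) (x 0) (-(x 1*v 0)) (0:ℝ) (x 0*v 2 - x 2*v 0) (-(x 2)) (x 1*v 2) (v 1)
  have eI1v2 : (fun s => I1 x (Function.update v 2 s)) = (fun s => (1:ℝ)*((0:ℝ)*s+(x 0*v 1 - x 1*v 0))^2 + (1:ℝ)*((x 0)*s+(-(x 2*v 0)))^2 + (1:ℝ)*((x 1)*s+(-(x 2*v 1)))^2) := by
    funext s; simp [hI1, Function.update]; ring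
  have hI1v2 := eI1v2 ▸ dquad (1:ℝ) (1:ℝ) (1:ℝ) (0:ℝ) (x 0*v 1 - x 1*v 0) (x 0) (-(x 2*v 0)) (x 1) (-(x 2*v 1)) (v 2)
  have eI2x0 : (fun s => I2 (Function.update x 0 s) v) = (fun s => (-1:ℝ)*((v 1)*s+(-(x 1*v 0)))^2 + (b^2)*((v 2)*s+(-(x 2*v 0)))^2 + (a^2)*((0:ℝ)*s+(x 1*v 2 - x 2*v 1))^2) := by
    funext s; simp [hI2, Function.update]; ring
  have hI2x0 := eI2x0 ▸ dquad (-1:ℝ) (b^2) (a^2) (v 1) (-(x 1*v 0)) (v 2) (-(x 2*v 0)) (0:ℝ) (x 1*v 2 - x 2*v 1) (x 0)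
  have eI2x1 : (fun s => I2 (Function.update x 1 s) v) = (fun s => (-1:ℝ)*((-(v 0))*s+(x 0*v 1))^2 + (b^2)*((0:ℝ)*s+(x 0*v 2 - x 2*v 0))^2 + (a^2)*((v 2)*s+(-(x 2*v 1)))^2) := by
    funext s; simp [hI2, Function.update]; ring
  have hI2x1 := eI2x1 ▸ dquad (-1:ℝ) (b^2) (a^2) (-(v 0)) (x 0*v 1) (0:ℝ) (x 0*v 2 - x 2*v 0) (v 2) (-(x 2*v 1)) (x 1)
  have eI2x2 : (fun s => I2 (Function.update x 2 s) v) = (fun s => (-1:ℝ)*((0:ℝ)*s+(x 0*v 1 - x 1*v 0))^2 + (b^2)*((-(v 0))*s+(x 0*v 2))^2 + (a^2)*((-(v 1))*s+(x 1*v 2))^2) := by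
    funext s; simp [hI2, Function.update]; ring
  have hI2x2 := eI2x2 ▸ dquad (-1:ℝ) (b^2) (a^2) (0:ℝ) (x 0*v 1 - x 1*v 0) (-(v 0)) (x 0*v 2) (-(v 1)) (x 1*v 2) (x 2)
  have eI2v0 : (fun s => I2 x (Function.update v 0 s)) = (fun s => (-1:ℝ)*((-(x 1))*s+(x 0*v 1))^2 + (b^2)*((-(x 2))*s+(x 0*v 2))^2 + (a^2)*((0:ℝ)*s+(x 1*v 2 - x 2*v 1))^2) := by
    funext s; simp [hI2, Function.update]; ring
  have hI2v0 := eI2v0 ▸ dquad (-1:ℝ) (b^2) (a^2) (-(x 1)) (x 0*v 1) (-(x 2)) (x 0*v 2) (0:ℝ) (x 1*v 2 - x 2*v 1) (v 0)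
  have eI2v1 : (fun s => I2 x (Function.update v 1 s)) = (fun s => (-1:ℝ)*((x 0)*s+(-(x 1*v 0)))^2 + (b^2)*((0:ℝ)*s+(x 0*v 2 - x 2*v 0))^2 + (a^2)*((-(x 2))*s+(x 1*v 2))^2) := by
    funext s; simp [hI2, Function.update]; ring
  have hI2v1 := eI2v1 ▸ dquad (-1:ℝ) (b^2) (a^2) (x 0) (-(x 1*v 0)) (0:ℝ) (x 0*v 2 - x 2*v 0) (-(x 2)) (x 1*v 2) (v 1)
  have eI2v2 : (fun s => I2 x (Function.update v 2 s)) = (fun s => (-1:ℝ)*((0:ℝ)*s+(x 0*v 1 - x 1*v 0))^2 + (b^2)*((x 0)*s+(-(x 2*v 0)))^2 + (a^2)*((x 1)*s+(-(x 2*v 1)))^2) := by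
    funext s; simp [hI2, Function.update]; ring
  have hI2v2 := eI2v2 ▸ dquad (-1:ℝ) (b^2) (a^2) (0:ℝ) (x 0*v 1 - x 1*v 0) (x 0) (-(x 2*v 0)) (x 1) (-(x 2*v 1)) (v 2)
  simp only [Fin.sum_univ_three, pderivX, pderivV]
  rw [hI1x0, hI1x1, hI1x2, hI1v0, hI1v1, hI1v2, hI2x0, hI2x1, hI2x2, hI2v0, hI2v1, hI2v2]
  ring
end
end

section
/- For integers k ≥ 1 let ξ_k = k^{−1/2}, let θ_k ∈ (0,π) be defined by cos θ_k = (cos(ξ_k − ξ_{k+1}) + 1)/2, fix a ∈ (−π/2, π/2], let t_k(a) = 1/cos(a − Σ_{i=k}^∞ θ_i) and p_k = (t_k(a) cos ξ_k, t_k(a) sin ξ_k, t_k(a)), defined for all k ≥ k₀(a) where a − Σ_{i=k}^∞ θ_i ∈ (−π/2, π/2). Let v_k = (p_{k+1} − p_k)/‖p_{k+1} − p_k‖. Then for every k > k₀(a): ⟨v_k, p_k/‖p_k‖⟩ = ⟨v_{k−1}, p_k/‖p_k‖⟩ = sin(a − Σ_{i=k}^∞ θ_i); that is, the lines l_{k−1}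 (through p_{k−1}, p_k) and l_k (through p_k, p_{k+1}) form the same angle with the vector p_k. -/
/-!
Write `A_k = a - ∑_{i ≥ k} θ_i` and `u ξ = (cos ξ, sin ξ, 1)`, so that `p_k = (cos A_k)⁻¹ • u ξ_k`.
Every `u ξ` has norm `√2` and `⟪u ξ_k, u ξ_{k+1}⟫ = 1 + cos (ξ_k - ξ_{k+1}) = 2 cos θ_k`, so `u ξ_k`
and `u ξ_{k+1}` make the angle `θ_k`, while `A_{k+1} = A_k + θ_k`. In the plane they span, the
points `x / cos A` and `y / cos (A + θ)` (for `x`, `y` of equal norm at angle `θ`) both lie on the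
line whose normal makes the angle `A` with `x` and `A + θ` with `y`; hence the chord through them
meets the two radius vectors at angles with cosines `sin A` and `sin (A + θ)`.
The series `∑ θ_i` converges because `θ_k ≤ π (ξ_k - ξ_{k+1})` telescopes.
-/

open Real
open scoped RealInnerProductSpace

theorem abs_le_pi_mul_abs_of_cos_eq_cos_add_one_div_two {θ δ : ℝ} (hθ : |θ| ≤ π)
    (h : cos θ = (cos δ + 1) / 2) : |θ| ≤ π * |δ| := by
  have hupper := cos_le_one_sub_mul_cos_sq hθ
  have hlower := one_sub_sq_div_two_le_cos (x := δ)
  have hsq : θ ^ 2 ≤ (π * δ) ^ 2 := by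
    have : 2 / π ^ 2 * θ ^ 2 ≤ δ ^ 2 / 4 := by linarith
    rw [div_mul_eq_mul_div, div_le_iff₀ (by positivity)] at this
    nlinarith [sq_nonneg δ, sq_nonneg π]
  simpa only [abs_mul, abs_of_pos pi_pos] using sq_le_sq.mp hsq

theorem summable_of_nonneg_of_le_mul_sub_succ {f g : ℕ → ℝ} {C b : ℝ} (hC : 0 ≤ C)
    (hg₀ : ∀ n, 0 ≤ g n) (hg : ∀ n, g n ≤ C * (f n - f (n + 1))) (hf : ∀ n, b ≤ f n) :
    Summable g := by
  refine summable_of_sum_range_le (c := C * (f 0 - b)) hg₀ fun n => ?_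
  calc ∑ i ∈ Finset.range n, g i ≤ ∑ i ∈ Finset.range n, C * (f i - f (i + 1)) :=
        Finset.sum_le_sum fun i _ => hg i
    _ = C * (f 0 - f n) := by rw [← Finset.mul_sum, Finset.sum_range_sub']
    _ ≤ C * (f 0 - b) := by gcongr; exact hf n

theorem summable_of_cos_eq_cos_sub_succ_add_one_div_two {ξ θ : ℕ → ℝ} {b : ℝ}
    (hξ : Antitone fun k => ξ (k + 1)) (hξb : ∀ k, b ≤ ξ k)
    (hθmem : ∀ k, 1 ≤ k → θ k ∈ Set.Ioo 0 π)
    (hθ : ∀ k, 1 ≤ k → cos (θ k) = (cos (ξ k - ξ (k + 1)) + 1) / 2) :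
    Summable θ := by
  refine (summable_nat_add_iff 1).mp <|
    summable_of_nonneg_of_le_mul_sub_succ pi_pos.le (f := fun k => ξ (k + 1)) (b := b)
      (fun n => (hθmem (n + 1) (by omega)).1.le) (fun n => ?_) (fun n => hξb _)
  obtain ⟨hpos, hlt⟩ := hθmem (n + 1) (by omega)
  have hδ : 0 ≤ ξ (n + 1) - ξ (n + 1 + 1) := sub_nonneg.mpr (hξ n.le_succ)
  have := abs_le_pi_mul_abs_of_cos_eq_cos_add_one_div_two (by rw [abs_of_pos hpos]; exact hlt.le)
    (hθ (n + 1) (by omega))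
  rwa [abs_of_pos hpos, abs_of_nonneg hδ] at this

theorem antitone_rpow_neg_half_succ :
    Antitone fun k : ℕ => ((k + 1 : ℕ) : ℝ) ^ (-(1 : ℝ) / 2) :=
  fun m n hmn => rpow_le_rpow_of_nonpos (by positivity) (by gcongr) (by norm_num)

theorem tsum_nat_add_eq_add_tsum_nat_add_succ {α : Type*} [AddCommGroup α] [TopologicalSpace α]
    [IsTopologicalAddGroup α] [T2Space α] {f : ℕ → α} (hf : Summable f) (m : ℕ) :
    ∑' i, f (m + i) = f m + ∑' i, f (m + 1 + i) := by
  have hm : Summable fun i => f (m + i) := by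
    simpa only [add_comm m] using (summable_nat_add_iff m).mpr hf
  rw [hm.tsum_eq_zero_add]
  simp only [add_zero, add_assoc, add_comm 1]

section Chord

variable {E : Type*} [NormedAddCommGroup E] [InnerProductSpace ℝ E]

theorem inner_unit_chord_unit_left {x y P Q : E} {A θ : ℝ} (hx : x ≠ 0) (hxy : ‖x‖ = ‖y‖)
    (hinner : ⟪x, y⟫ = ‖x‖ * ‖y‖ * cos θ) (hθ : 0 < sin θ) (hA : 0 < cos A)
    (hAθ : 0 < cos (A + θ)) (hP : P = (cos A)⁻¹ • x) (hQ : Q = (cos (A + θ))⁻¹ • y) :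
    ⟪‖Q - P‖⁻¹ • (Q - P), ‖P‖⁻¹ • P⟫ = sin A := by
  have hxx : ⟪x, x⟫ = ‖x‖ ^ 2 := real_inner_self_eq_norm_sq x
  have hyy : ⟪y, y⟫ = ‖x‖ ^ 2 := by rw [real_inner_self_eq_norm_sq, hxy]
  have hxy' : ⟪x, y⟫ = ‖x‖ ^ 2 * cos θ := by rw [hinner, ← hxy]; ring
  have hyx : ⟪y, x⟫ = ‖x‖ ^ 2 * cos θ := by rw [real_inner_comm, hxy']
  have hcosB : cos (A + θ) = cos A * cos θ - sin A * sin θ := cos_add A θ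
  have hnP : ‖P‖ = ‖x‖ / cos A := by
    rw [hP, norm_smul, norm_inv, norm_of_nonneg hA.le, inv_mul_eq_div]
  have hnQP : ‖Q - P‖ = ‖x‖ * sin θ / (cos A * cos (A + θ)) := by
    rw [← sq_eq_sq₀ (norm_nonneg _) (by positivity), ← real_inner_self_eq_norm_sq, hP, hQ]
    simp only [inner_sub_left, inner_sub_right, real_inner_smul_left, real_inner_smul_right,
      hxx, hyy, hxy', hyx]
    field_simp
    rw [hcosB]
    linear_combination sin θ ^ 2 * sin_sq_add_cos_sq A - cos A ^ 2 * sin_sq_add_cos_sq θ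
  have hQPP : ⟪Q - P, P⟫ = ‖x‖ ^ 2 * sin A * sin θ / (cos A ^ 2 * cos (A + θ)) := by
    rw [inner_sub_left, hP, hQ]
    simp only [real_inner_smul_left, real_inner_smul_right, hxx, hyx]
    field_simp
    rw [hcosB]
    ring
  rw [real_inner_smul_left, real_inner_smul_right, hQPP, hnP, hnQP]
  field_simp

theorem inner_unit_chord_unit_right {x y P Q : E} {A θ : ℝ} (hx : x ≠ 0) (hxy : ‖x‖ = ‖y‖)
    (hinner : ⟪x, y⟫ = ‖x‖ * ‖y‖ * cos θ) (hθ : 0 < sin θ) (hA : 0 < cos A)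
    (hAθ : 0 < cos (A + θ)) (hP : P = (cos A)⁻¹ • x) (hQ : Q = (cos (A + θ))⁻¹ • y) :
    ⟪‖Q - P‖⁻¹ • (Q - P), ‖Q‖⁻¹ • Q⟫ = sin (A + θ) := by
  have hy : y ≠ 0 := norm_pos_iff.mp (hxy ▸ norm_pos_iff.mpr hx)
  have hA' : -(A + θ) + θ = -A := by ring
  -- the left case for the reversed chord from `Q` to `P`, with `-(A + θ)` in the role of `A`
  have hswap := inner_unit_chord_unit_left (A := -(A + θ)) (P := Q) (Q := P) hy hxy.symm
    (by rw [real_inner_comm, hinner, mul_comm ‖x‖]) hθ (by rwa [cos_neg])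
    (by rwa [hA', cos_neg]) (by rw [hQ, cos_neg]) (by rw [hP, hA', cos_neg])
  rw [← neg_sub, norm_neg, smul_neg, inner_neg_left, sin_neg] at hswap
  linarith

end Chord

noncomputable def coneGenerator (ξ : ℝ) : EuclideanSpace ℝ (Fin 3) := !₂[cos ξ, sin ξ, 1]

theorem inner_coneGenerator (ξ η : ℝ) : ⟪coneGenerator ξ, coneGenerator η⟫ = cos (ξ - η) + 1 := by
  simp [coneGenerator, PiLp.inner_apply, Fin.sum_univ_three, cos_sub]
  ring

theorem norm_coneGenerator (ξ : ℝ) : ‖coneGenerator ξ‖ = √2 := by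
  rw [norm_eq_sqrt_real_inner, inner_coneGenerator, sub_self, cos_zero]
  norm_num

theorem inner_unit_chord_coneGenerator {ξ₁ ξ₂ θ A : ℝ} {P Q : EuclideanSpace ℝ (Fin 3)}
    (hθ : cos θ = (cos (ξ₁ - ξ₂) + 1) / 2) (hsin : 0 < sin θ) (hA : 0 < cos A)
    (hAθ : 0 < cos (A + θ)) (hP : P = (cos A)⁻¹ • coneGenerator ξ₁)
    (hQ : Q = (cos (A + θ))⁻¹ • coneGenerator ξ₂) :
    ⟪‖Q - P‖⁻¹ • (Q - P), ‖P‖⁻¹ • P⟫ = sin A ∧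
      ⟪‖Q - P‖⁻¹ • (Q - P), ‖Q‖⁻¹ • Q⟫ = sin (A + θ) := by
  have hne : coneGenerator ξ₁ ≠ 0 := norm_pos_iff.mp (by rw [norm_coneGenerator]; positivity)
  have hnorm : ‖coneGenerator ξ₁‖ = ‖coneGenerator ξ₂‖ := by
    rw [norm_coneGenerator, norm_coneGenerator]
  have hinner : ⟪coneGenerator ξ₁, coneGenerator ξ₂⟫ =
      ‖coneGenerator ξ₁‖ * ‖coneGenerator ξ₂‖ * cos θ := by
    rw [inner_coneGenerator, norm_coneGenerator, norm_coneGenerator, mul_self_sqrt zero_le_two, hθ]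
    ring
  exact ⟨inner_unit_chord_unit_left hne hnorm hinner hsin hA hAθ hP hQ,
    inner_unit_chord_unit_right hne hnorm hinner hsin hA hAθ hP hQ⟩

theorem stmt_10_general (ξ θ : ℕ → ℝ)
    (hξ : ∀ k : ℕ, ξ k = (k : ℝ) ^ (-(1 : ℝ) / 2))
    (hθmem : ∀ k : ℕ, 1 ≤ k → θ k ∈ Set.Ioo 0 π)
    (hθ : ∀ k : ℕ, 1 ≤ k → Real.cos (θ k) = (Real.cos (ξ k - ξ (k + 1)) + 1) / 2)
    (a : ℝ)
    (k₀ : ℕ) (hk₀ : 1 ≤ k₀)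
    (hk₀a : ∀ k : ℕ, k₀ ≤ k → (a - ∑' i : ℕ, θ (k + i)) ∈ Set.Ioo (-(π / 2)) (π / 2))
    (t : ℕ → ℝ) (ht : ∀ k : ℕ, t k = 1 / Real.cos (a - ∑' i : ℕ, θ (k + i)))
    (p : ℕ → EuclideanSpace ℝ (Fin 3))
    (hp : ∀ k : ℕ, p k 0 = t k * Real.cos (ξ k) ∧ p k 1 = t k * Real.sin (ξ k) ∧
      p k 2 = t k)
    (v : ℕ → EuclideanSpace ℝ (Fin 3))
    (hv : ∀ k : ℕ, v k = ‖p (k + 1) - p k‖⁻¹ • (p (k + 1) - p k))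
    (k : ℕ) (hk : k₀ < k) :
    ⟪v k, ‖p k‖⁻¹ • p k⟫ = Real.sin (a - ∑' i : ℕ, θ (k + i)) ∧
      ⟪v (k - 1), ‖p k‖⁻¹ • p k⟫ = Real.sin (a - ∑' i : ℕ, θ (k + i)) := by
  have hθsum : Summable θ := summable_of_cos_eq_cos_sub_succ_add_one_div_two (b := 0)
    (by simpa only [hξ] using antitone_rpow_neg_half_succ) (fun k => by rw [hξ]; positivity)
    hθmem hθ
  have hp_eq : ∀ m, p m = (cos (a - ∑' i, θ (m + i)))⁻¹ • coneGenerator (ξ m) := by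
    intro m
    obtain ⟨h0, h1, h2⟩ := hp m
    ext i
    fin_cases i <;> simp [h0, h1, h2, ht, coneGenerator, mul_comm]
  have hstep : ∀ m, k₀ ≤ m →
      ⟪v m, ‖p m‖⁻¹ • p m⟫ = sin (a - ∑' i, θ (m + i)) ∧
      ⟪v m, ‖p (m + 1)‖⁻¹ • p (m + 1)⟫ = sin (a - ∑' i, θ (m + 1 + i)) := by
    intro m hm
    have hm₁ : 1 ≤ m := hk₀.trans hm
    have hshift : a - ∑' i, θ (m + 1 + i) = (a - ∑' i, θ (m + i)) + θ m := by
      rw [tsum_nat_add_eq_add_tsum_nat_add_succ hθsum m]; ring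
    have hcos := cos_pos_of_mem_Ioo (hk₀a m hm)
    have hcos_succ := hshift ▸ cos_pos_of_mem_Ioo (hk₀a (m + 1) (by omega))
    have hsin := sin_pos_of_pos_of_lt_pi (hθmem m hm₁).1 (hθmem m hm₁).2
    have hp_succ := hshift ▸ hp_eq (m + 1)
    rw [hv m, hshift]
    exact inner_unit_chord_coneGenerator (hθ m hm₁) hsin hcos hcos_succ (hp_eq m) hp_succ
  obtain ⟨j, rfl⟩ : ∃ j, k = j + 1 := ⟨k - 1, by omega⟩
  exact ⟨(hstep _ hk.le).1, (hstep j (by omega)).2⟩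

/-- For `k > k₀(a)`, the segments `l_{k-1}` and `l_k` of the constructed polygonal line form
the same angle with the vector `p_k`; both inner products with the unit vector `p_k/‖p_k‖`
equal `sin(a − ∑_{i=k}^∞ θ_i)`. -/
theorem stmt_10 (ξ θ : ℕ → ℝ)
    (hξ : ∀ k : ℕ, ξ k = (k : ℝ) ^ (-(1 : ℝ) / 2))
    (hθmem : ∀ k : ℕ, 1 ≤ k → θ k ∈ Set.Ioo 0 π)
    (hθ : ∀ k : ℕ, 1 ≤ k → Real.cos (θ k) = (Real.cos (ξ k - ξ (k + 1)) + 1) / 2)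
    (a : ℝ) (ha : a ∈ Set.Ioc (-(π / 2)) (π / 2))
    (k₀ : ℕ) (hk₀ : 1 ≤ k₀)
    (hk₀a : ∀ k : ℕ, k₀ ≤ k → (a - ∑' i : ℕ, θ (k + i)) ∈ Set.Ioo (-(π / 2)) (π / 2))
    (t : ℕ → ℝ) (ht : ∀ k : ℕ, t k = 1 / Real.cos (a - ∑' i : ℕ, θ (k + i)))
    (p : ℕ → EuclideanSpace ℝ (Fin 3))
    (hp : ∀ k : ℕ, p k 0 = t k * Real.cos (ξ k) ∧ p k 1 = t k * Real.sin (ξ k) ∧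
      p k 2 = t k)
    (v : ℕ → EuclideanSpace ℝ (Fin 3))
    (hv : ∀ k : ℕ, v k = ‖p (k + 1) - p k‖⁻¹ • (p (k + 1) - p k))
    (k : ℕ) (hk : k₀ < k) :
    ⟪v k, ‖p k‖⁻¹ • p k⟫ = Real.sin (a - ∑' i : ℕ, θ (k + i)) ∧
      ⟪v (k - 1), ‖p k‖⁻¹ • p k⟫ = Real.sin (a - ∑' i : ℕ, θ (k + i)) :=
  stmt_10_general ξ θ hξ hθmem hθ a k₀ hk₀ hk₀a t ht p hp v hv k hk
end

section
/- For integers k ≥ 1 let ξ_k = k^{−1/2}, let θ_k ∈ (0,π) be defined by cos θ_k = (cos(ξ_k − ξ_{k+1}) + 1)/2, fix a ∈ (−π/2, π/2), let t_k(a) = 1/cos(a − Σ_{i=k}^∞ θ_i) and p_k = (t_k(a) cos ξ_k, t_k(a) sin ξ_k, t_k(a)), defined for all k ≥ k₀(a) where a − Σ_{i=k}^∞ θ_i ∈ (−π/2, π/2). Then the total length of the polygonal line through the p_k is finite and equals Σ_{k=k₀(a)}^∞ ‖p_{k+1} − p_k‖ = √2 · sin(Σ_{i=k₀(a)}^∞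 θ_i) / ( cos(a − Σ_{i=k₀(a)}^∞ θ_i) · cos a ). -/
/-!
Put `b_k = a − ∑_{i ≥ k} θ_i`, so that `b_{k+1} = b_k + θ_k` and `p_k = sec b_k · (cos ξ_k, sin ξ_k, 1)`.
As `⟨(cos x, sin x, 1), (cos y, sin y, 1)⟩ = cos (x − y) + 1 = 2 cos θ_k`, the law of cosines gives
`‖p_{k+1} − p_k‖ = √2 (tan b_{k+1} − tan b_k)`, so the length telescopes to
`√2 (tan a − tan b_{k₀}) = √2 sin (∑ θ) / (cos b_{k₀} cos a)`.
The series `∑ θ_i` converges because `θ_k ≤ 2 (ξ_k − ξ_{k+1})`.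
-/

open Real Filter Topology

noncomputable section

lemma abs_le_two_mul_abs_of_cos_eq {θ d : ℝ} (hθ : |θ| ≤ π) (h : cos θ = (cos d + 1) / 2) :
    |θ| ≤ 2 * |d| := by
  have hθd : 2 / π ^ 2 * θ ^ 2 ≤ d ^ 2 / 4 := by
    linarith [cos_le_one_sub_mul_cos_sq hθ, one_sub_sq_div_two_le_cos (x := d)]
  have : θ ^ 2 ≤ (2 * d) ^ 2 := by
    rw [div_mul_eq_mul_div, div_le_iff₀ (by positivity)] at hθd
    nlinarith [mul_le_mul_of_nonneg_left (pow_le_pow_left₀ pi_pos.le pi_le_four 2) (sq_nonneg d)]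
  simpa [abs_mul] using sq_le_sq.1 this

lemma Monotone.hasSum_sub_of_tendsto {f : ℕ → ℝ} {l : ℝ} (hf : Monotone f)
    (h : Tendsto f atTop (𝓝 l)) : HasSum (fun n => f (n + 1) - f n) (l - f 0) := by
  refine (hasSum_iff_tendsto_nat_of_nonneg (fun n => sub_nonneg.2 (hf n.le_succ)) _).2 ?_
  simpa only [Finset.sum_range_sub] using h.sub_const (f 0)

lemma summable_of_cos_eq_cos_sub_succ {ξ θ : ℕ → ℝ} (hξ : Antitone ξ)
    (hξ0 : Tendsto ξ atTop (𝓝 0)) (hθπ : ∀ k, |θ k| ≤ π)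
    (hθ : ∀ k, cos (θ k) = (cos (ξ k - ξ (k + 1)) + 1) / 2) : Summable θ := by
  have hdiff : Summable fun k => 2 * (ξ k - ξ (k + 1)) := by
    refine ((hξ.neg.hasSum_sub_of_tendsto (by simpa using hξ0.neg)).summable.mul_left 2).congr
      fun k => ?_
    ring
  refine Summable.of_norm_bounded hdiff fun k => ?_
  rw [norm_eq_abs, ← abs_of_nonneg (sub_nonneg.2 (hξ k.le_succ))]
  exact abs_le_two_mul_abs_of_cos_eq (hθπ k) (hθ k)

lemma antitone_natCast_succ_rpow {r : ℝ} (hr : r ≤ 0) :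
    Antitone fun n : ℕ => ((n + 1 : ℕ) : ℝ) ^ r :=
  antitone_nat_of_succ_le fun n => rpow_le_rpow_of_nonpos (by positivity) (by simp) hr

lemma tendsto_natCast_succ_rpow_atTop {r : ℝ} (hr : r < 0) :
    Tendsto (fun n : ℕ => ((n + 1 : ℕ) : ℝ) ^ r) atTop (𝓝 0) := by
  simpa [Function.comp_def] using (tendsto_rpow_neg_atTop (neg_pos.2 hr)).comp
    (tendsto_natCast_atTop_atTop.comp (tendsto_add_atTop_nat 1))

lemma summable_of_cos_eq_cos_sub_rpow {ξ θ : ℕ → ℝ} (hξ : ∀ k : ℕ, ξ k = (k : ℝ) ^ (-(1 : ℝ) / 2))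
    (hθmem : ∀ k : ℕ, 1 ≤ k → θ k ∈ Set.Ioo 0 π)
    (hθ : ∀ k : ℕ, 1 ≤ k → cos (θ k) = (cos (ξ k - ξ (k + 1)) + 1) / 2) : Summable θ := by
  refine (summable_nat_add_iff 1).1 (summable_of_cos_eq_cos_sub_succ (ξ := fun n => ξ (n + 1))
    ?_ ?_ (fun k => ?_) (fun k => hθ (k + 1) (by omega)))
  · simpa only [hξ] using antitone_natCast_succ_rpow (r := -(1 : ℝ) / 2) (by norm_num)
  · simpa only [hξ] using tendsto_natCast_succ_rpow_atTop (r := -(1 : ℝ) / 2) (by norm_num)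
  · obtain ⟨hpos, hlt⟩ := hθmem (k + 1) (by omega)
    exact abs_le.2 ⟨by linarith [pi_pos], hlt.le⟩

section Tail

variable {G : Type*} [AddCommGroup G] [TopologicalSpace G] [IsTopologicalAddGroup G] [T2Space G]

lemma tsum_nat_add_eq_add_tsum {f : ℕ → G} (hf : Summable f) (k : ℕ) :
    ∑' i, f (k + i) = f k + ∑' i, f (k + 1 + i) := by
  have hk : Summable fun i => f (k + i) := by
    simpa only [add_comm] using (summable_nat_add_iff k).2 hf
  rw [hk.tsum_eq_zero_add]
  simp only [add_zero, add_assoc, add_comm 1]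

lemma tendsto_tsum_nat_add_atTop (f : ℕ → G) :
    Tendsto (fun k => ∑' i, f (k + i)) atTop (𝓝 0) := by
  simpa only [add_comm] using tendsto_sum_nat_add f

end Tail

def conePoint (t x : ℝ) : EuclideanSpace ℝ (Fin 3) := !₂[t * cos x, t * sin x, t]

lemma norm_conePoint_sub_sq (s t x y : ℝ) :
    ‖conePoint s y - conePoint t x‖ ^ 2 = 2 * (s ^ 2 + t ^ 2 - s * t * (cos (x - y) + 1)) := by
  rw [EuclideanSpace.real_norm_sq_eq, Fin.sum_univ_three]
  simp only [conePoint, PiLp.sub_apply, Matrix.cons_val_zero, Matrix.cons_val_one, Matrix.cons_val,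
    cos_sub]
  linear_combination s ^ 2 * sin_sq_add_cos_sq y + t ^ 2 * sin_sq_add_cos_sq x

lemma tan_sub_tan {x y : ℝ} (hx : cos x ≠ 0) (hy : cos y ≠ 0) :
    tan y - tan x = sin (y - x) / (cos x * cos y) := by
  rw [tan_eq_sin_div_cos, tan_eq_sin_div_cos, sin_sub]
  field_simp

lemma inv_cos_sq_add_inv_cos_sq_sub {b b' : ℝ} (hb : cos b ≠ 0) (hb' : cos b' ≠ 0) :
    (1 / cos b') ^ 2 + (1 / cos b) ^ 2 - 2 * (1 / cos b') * (1 / cos b) * cos (b' - b)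
      = (tan b' - tan b) ^ 2 := by
  rw [tan_eq_sin_div_cos, tan_eq_sin_div_cos, cos_sub]
  field_simp
  linear_combination -cos b ^ 2 * sin_sq_add_cos_sq b' - cos b' ^ 2 * sin_sq_add_cos_sq b

lemma norm_conePoint_inv_cos_sub {b b' x y : ℝ} (hb : b ∈ Set.Ioo (-(π / 2)) (π / 2))
    (hb' : b' ∈ Set.Ioo (-(π / 2)) (π / 2)) (hbb' : b ≤ b')
    (hcos : cos (x - y) + 1 = 2 * cos (b' - b)) :
    ‖conePoint (1 / cos b') y - conePoint (1 / cos b) x‖ = √2 * (tan b' - tan b) := by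
  have hsq : ‖conePoint (1 / cos b') y - conePoint (1 / cos b) x‖ ^ 2
      = 2 * (tan b' - tan b) ^ 2 := by
    rw [norm_conePoint_sub_sq, hcos, ← inv_cos_sq_add_inv_cos_sq_sub (cos_pos_of_mem_Ioo hb).ne'
      (cos_pos_of_mem_Ioo hb').ne']
    ring
  rw [← sqrt_sq (norm_nonneg _), hsq, sqrt_mul zero_le_two,
    sqrt_sq (sub_nonneg.2 (strictMonoOn_tan.monotoneOn hb hb' hbb'))]

lemma hasSum_tan_sub_of_tendsto {b : ℕ → ℝ} {a : ℝ}
    (hb : ∀ n, b n ∈ Set.Ioo (-(π / 2)) (π / 2)) (hb_mono : Monotone b)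
    (ha : a ∈ Set.Ioo (-(π / 2)) (π / 2)) (hlim : Tendsto b atTop (𝓝 a)) :
    HasSum (fun n => tan (b (n + 1)) - tan (b n)) (tan a - tan (b 0)) :=
  Monotone.hasSum_sub_of_tendsto
    (fun m n hmn => strictMonoOn_tan.monotoneOn (hb m) (hb n) (hb_mono hmn))
    ((continuousAt_tan.2 (cos_pos_of_mem_Ioo ha).ne').tendsto.comp hlim)

/-- For `a ∈ (−π/2, π/2)` the polygonal line through the points `p_k`, `k ≥ k₀(a)`, has
finite total length, equal to
`√2 · sin(∑_{i=k₀}^∞ θ_i) / (cos(a − ∑_{i=k₀}^∞ θ_i) · cos a)`. -/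
theorem stmt_11 (ξ θ : ℕ → ℝ)
    (hξ : ∀ k : ℕ, ξ k = (k : ℝ) ^ (-(1 : ℝ) / 2))
    (hθmem : ∀ k : ℕ, 1 ≤ k → θ k ∈ Set.Ioo 0 π)
    (hθ : ∀ k : ℕ, 1 ≤ k → Real.cos (θ k) = (Real.cos (ξ k - ξ (k + 1)) + 1) / 2)
    (a : ℝ) (ha : a ∈ Set.Ioo (-(π / 2)) (π / 2))
    (k₀ : ℕ) (hk₀ : 1 ≤ k₀)
    (hk₀a : ∀ k : ℕ, k₀ ≤ k → (a - ∑' i : ℕ, θ (k + i)) ∈ Set.Ioo (-(π / 2)) (π / 2))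
    (t : ℕ → ℝ) (ht : ∀ k : ℕ, t k = 1 / Real.cos (a - ∑' i : ℕ, θ (k + i)))
    (p : ℕ → EuclideanSpace ℝ (Fin 3))
    (hp : ∀ k : ℕ, p k 0 = t k * Real.cos (ξ k) ∧ p k 1 = t k * Real.sin (ξ k) ∧
      p k 2 = t k) :
    (Summable fun i : ℕ => ‖p (k₀ + i + 1) - p (k₀ + i)‖) ∧
      (∑' i : ℕ, ‖p (k₀ + i + 1) - p (k₀ + i)‖) =
        Real.sqrt 2 * Real.sin (∑' i : ℕ, θ (k₀ + i)) /
          (Real.cos (a - ∑' i : ℕ, θ (k₀ + i)) * Real.cos a) := by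
  have hθ_summable : Summable θ := summable_of_cos_eq_cos_sub_rpow hξ hθmem hθ
  set b : ℕ → ℝ := fun k => a - ∑' i, θ (k + i) with hb
  have hb_succ : ∀ k, b (k + 1) = b k + θ k := fun k => by
    simp only [hb, tsum_nat_add_eq_add_tsum hθ_summable k]; ring
  have ht' : ∀ k, t k = 1 / cos (b k) := ht
  have hb_mem : ∀ n, b (k₀ + n) ∈ Set.Ioo (-(π / 2)) (π / 2) := fun n => hk₀a _ (by omega)
  have hb_mono : Monotone fun n => b (k₀ + n) := monotone_nat_of_le_succ fun n => by
    rw [← add_assoc, hb_succ]; linarith [(hθmem (k₀ + n) (by omega)).1]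
  have hb_lim : Tendsto (fun n => b (k₀ + n)) atTop (𝓝 a) := by
    have h := ((tendsto_add_atTop_iff_nat k₀).2 (tendsto_tsum_nat_add_atTop θ)).const_sub a
    rw [sub_zero] at h
    exact h.congr fun n => by simp only [hb, add_comm n k₀]
  have hp_eq : ∀ k, p k = conePoint (t k) (ξ k) := fun k => by
    ext i; fin_cases i <;> simp [conePoint, hp]
  have hdist : ∀ n, ‖p (k₀ + n + 1) - p (k₀ + n)‖
      = √2 * (tan (b (k₀ + (n + 1))) - tan (b (k₀ + n))) := fun n => by
    rw [hp_eq, hp_eq, ht', ht', add_assoc]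
    refine norm_conePoint_inv_cos_sub (hb_mem n) (hb_mem (n + 1)) (hb_mono n.le_succ) ?_
    rw [← add_assoc, hb_succ, add_sub_cancel_left, hθ _ (by omega)]; ring
  have hsum : HasSum (fun n => ‖p (k₀ + n + 1) - p (k₀ + n)‖) (√2 * (tan a - tan (b k₀))) := by
    simpa only [hdist, add_zero] using
      (hasSum_tan_sub_of_tendsto hb_mem hb_mono ha hb_lim).mul_left √2
  refine ⟨hsum.summable, hsum.tsum_eq.trans ?_⟩
  rw [tan_sub_tan (cos_pos_of_mem_Ioo (hk₀a k₀ le_rfl)).ne' (cos_pos_of_mem_Ioo ha).ne',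
    sub_sub_cancel, mul_div_assoc]
end
end

section
/- For integers k ≥ 2 let ξ_k = k^{−1/2}, δ_k = ξ_k − ξ_{k+1}, and let θ_k ∈ (0, π/2) be defined by sin(θ_k/2) = (√2/2) sin(δ_k/2). Define g_k = sin(θ_k/2)cos(θ_{k−1}/2) + cos(θ_k/2)sin(θ_{k−1}/2) and f_k = √2( cos(δ_k/2)cos(θ_{k−1}/2) − cos(θ_k/2)cos(δ_{k−1}/2) ), and let σ_k = arcsin( f_k / √(g_k² + f_k²) ). Then σ_k = b_k k^{−5/2} where b_k → 3/16 as k → ∞; equivalently, k^{5/2} σ_k → 3/16. -/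
/-!
Every quantity is a smooth function of small angles. The gaps `δ_k` are first differences of
`x ↦ x^{-1/2}`, so `δ_k ~ k^{-3/2}/2`, and their difference is a second difference,
`δ_{k-1} - δ_k ~ (3/4) k^{-5/2}`. Hence `θ_k ~ δ_k/√2` and `g_k = sin (θ_k/2 + θ_{k-1}/2)` is of
order `k^{-3/2}`. The two products of cosines in `f_k` have squares differing by exactly
`(1/2) sin (δ_{k-1}/2 + δ_k/2) sin (δ_{k-1}/2 - δ_k/2)`, which makes `f_k` of order `k^{-4}`.
Finally `σ_k = arctan (f_k / g_k) ~ f_k / g_k ~ (3/16) k^{-5/2}`. Each of these equivalences is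
an instance of: if `z_k s_k → c`, `s_k → ∞` and `F(0) = 0`, then `F(z_k) s_k → F'(0) c`; the
second difference needs the second-order version, obtained by L'Hôpital's rule.
-/

open Real Filter Topology Set

section Slope

variable {ι : Type*} {l : Filter ι}

theorem tendsto_zero_of_tendsto_mul_atTop {z s : ι → ℝ} {c : ℝ}
    (hzs : Tendsto (fun i => z i * s i) l (𝓝 c)) (hs : Tendsto s l atTop) :
    Tendsto z l (𝓝 0) :=
  (hzs.div_atTop hs).congr' <| by
    filter_upwards [hs.eventually_gt_atTop 0] with i hi
    rw [mul_div_cancel_right₀ _ hi.ne']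

theorem HasDerivAt.tendsto_comp_mul {F : ℝ → ℝ} {d c : ℝ} (hF : HasDerivAt F d 0)
    (hF0 : F 0 = 0) {z s : ι → ℝ} (hzs : Tendsto (fun i => z i * s i) l (𝓝 c))
    (hs : Tendsto s l atTop) : Tendsto (fun i => F (z i) * s i) l (𝓝 (d * c)) := by
  have hslope : Tendsto (fun i => dslope F 0 (z i)) l (𝓝 d) := by
    have h := (continuousAt_dslope_same.2 hF.differentiableAt).tendsto.comp
      (tendsto_zero_of_tendsto_mul_atTop hzs hs)
    rwa [dslope_same, hF.deriv] at h
  refine (hslope.mul hzs).congr fun i => ?_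
  have h := sub_smul_dslope F 0 (z i)
  rw [sub_zero, smul_eq_mul, hF0, sub_zero] at h
  rw [← h]
  ring

end Slope

theorem tendsto_div_sq_of_hasDerivAt {F F' : ℝ → ℝ} {c : ℝ}
    (hF : ∀ᶠ x in 𝓝 0, HasDerivAt F (F' x) x) (hF0 : F 0 = 0) (hF'0 : F' 0 = 0)
    (hF' : HasDerivAt F' c 0) : Tendsto (fun x => F x / x ^ 2) (𝓝[≠] 0) (𝓝 (c / 2)) := by
  have hFc : Tendsto F (𝓝 0) (𝓝 0) := by
    simpa [hF0] using hF.self_of_nhds.continuousAt.tendsto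
  have hsq : Tendsto (fun x : ℝ => x ^ 2) (𝓝 0) (𝓝 0) := by
    simpa using (continuous_pow 2).tendsto (0 : ℝ)
  refine HasDerivAt.lhopital_zero_nhdsNE (f' := F') (g' := fun x => 2 * x)
    (eventually_nhdsWithin_of_eventually_nhds hF)
    (Eventually.of_forall fun x => by simpa using hasDerivAt_pow 2 x)
    (eventually_nhdsWithin_of_forall fun x hx => mul_ne_zero two_ne_zero hx)
    (hFc.mono_left nhdsWithin_le_nhds) (hsq.mono_left nhdsWithin_le_nhds) ?_
  refine (hF'.tendsto_slope.div_const 2).congr' ?_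
  filter_upwards [self_mem_nhdsWithin] with x hx
  rw [slope_def_field, hF'0, sub_zero, sub_zero]
  field_simp

namespace Real

theorem add_rpow_eq_rpow_mul {x y : ℝ} (r : ℝ) (hx : 0 < x) (hxy : 0 ≤ 1 + y * x⁻¹) :
    (x + y) ^ r = x ^ r * (1 + y * x⁻¹) ^ r := by
  rw [← mul_rpow hx.le hxy]
  congr 1
  field_simp

theorem rpow_mul_rpow_sub {x : ℝ} (hx : 0 < x) (r p : ℝ) : x ^ r * x ^ (p - r) = x ^ p := by
  rw [← rpow_add hx, add_sub_cancel]

theorem hasDerivAt_one_add_mul_rpow (r a : ℝ) {x : ℝ} (hx : 1 + a * x ≠ 0) :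
    HasDerivAt (fun x : ℝ => (1 + a * x) ^ r) (a * r * (1 + a * x) ^ (r - 1)) x := by
  simpa using ((hasDerivAt_id x).const_mul a |>.const_add 1).rpow_const (p := r) (Or.inl hx)

theorem hasDerivAt_one_add_mul_rpow_zero (r a : ℝ) :
    HasDerivAt (fun x : ℝ => (1 + a * x) ^ r) (a * r) 0 := by
  simpa using hasDerivAt_one_add_mul_rpow r a (x := 0) (by simp)

end Real

theorem tendsto_natCast_inv_nhdsNE_zero :
    Tendsto (fun k : ℕ => (k : ℝ)⁻¹) atTop (𝓝[≠] 0) :=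
  (tendsto_inv_atTop_nhdsGT_zero.comp tendsto_natCast_atTop_atTop).mono_right
    (nhdsGT_le_nhdsNE 0)

theorem tendsto_natCast_inv_mul_self :
    Tendsto (fun k : ℕ => (k : ℝ)⁻¹ * k) atTop (𝓝 1) :=
  tendsto_const_nhds.congr' <| by
    filter_upwards [eventually_ge_atTop 1] with k hk
    rw [inv_mul_cancel₀ (by positivity)]

theorem tendsto_natCast_rpow_atTop {p : ℝ} (hp : 0 < p) :
    Tendsto (fun k : ℕ => (k : ℝ) ^ p) atTop atTop :=
  (tendsto_rpow_atTop hp).comp tendsto_natCast_atTop_atTop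

theorem one_add_neg_one_mul_inv_nonneg {x : ℝ} (hx : 1 ≤ x) : 0 ≤ 1 + -1 * x⁻¹ := by
  rw [neg_one_mul, ← sub_eq_add_neg, sub_nonneg]
  exact inv_le_one_of_one_le₀ hx

theorem tendsto_rpow_sub_rpow_succ_mul (r : ℝ) :
    Tendsto (fun k : ℕ => ((k : ℝ) ^ r - ((k : ℝ) + 1) ^ r) * (k : ℝ) ^ (1 - r)) atTop
      (𝓝 (-r)) := by
  have hF : HasDerivAt (fun x : ℝ => 1 - (1 + 1 * x) ^ r) (-r) 0 := by
    simpa using (hasDerivAt_one_add_mul_rpow_zero r 1).const_sub 1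
  have h := hF.tendsto_comp_mul (by simp) tendsto_natCast_inv_mul_self tendsto_natCast_atTop_atTop
  rw [mul_one] at h
  refine h.congr' ?_
  filter_upwards [eventually_ge_atTop 1] with k hk
  have hk : (0 : ℝ) < k := by positivity
  have e := rpow_mul_rpow_sub hk r 1
  rw [rpow_one] at e
  rw [add_rpow_eq_rpow_mul r hk (by positivity)]
  linear_combination ((1 + 1 * (k : ℝ)⁻¹) ^ r - 1) * e

theorem tendsto_rpow_pred_sub_rpow_mul (r : ℝ) :
    Tendsto (fun k : ℕ => (((k : ℝ) - 1) ^ r - (k : ℝ) ^ r) * (k : ℝ) ^ (1 - r)) atTop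
      (𝓝 (-r)) := by
  have hF : HasDerivAt (fun x : ℝ => (1 + -1 * x) ^ r - 1) (-r) 0 := by
    simpa using (hasDerivAt_one_add_mul_rpow_zero r (-1)).sub_const 1
  have h := hF.tendsto_comp_mul (by simp) tendsto_natCast_inv_mul_self tendsto_natCast_atTop_atTop
  rw [mul_one] at h
  refine h.congr' ?_
  filter_upwards [eventually_ge_atTop 1] with k hk
  have hk1 : (1 : ℝ) ≤ k := by exact_mod_cast hk
  have hk : (0 : ℝ) < k := by positivity
  have e := rpow_mul_rpow_sub hk r 1
  rw [rpow_one] at e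
  rw [sub_eq_add_neg (k : ℝ), add_rpow_eq_rpow_mul r hk (one_add_neg_one_mul_inv_nonneg hk1)]
  linear_combination (1 - (1 + -1 * (k : ℝ)⁻¹) ^ r) * e

theorem tendsto_rpow_pred_sub_two_mul_rpow_add_rpow_succ_mul (r : ℝ) :
    Tendsto (fun k : ℕ => (((k : ℝ) - 1) ^ r - 2 * (k : ℝ) ^ r + ((k : ℝ) + 1) ^ r) *
      (k : ℝ) ^ (2 - r)) atTop (𝓝 (r * (r - 1))) := by
  set F : ℝ → ℝ := fun x => (1 + -1 * x) ^ r - 2 + (1 + 1 * x) ^ r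
  set F' : ℝ → ℝ := fun x => -1 * r * (1 + -1 * x) ^ (r - 1) + 1 * r * (1 + 1 * x) ^ (r - 1)
  have hF : ∀ᶠ x in 𝓝 0, HasDerivAt F (F' x) x := by
    filter_upwards [Ioo_mem_nhds (show (-1 : ℝ) < 0 by norm_num) one_pos] with x hx
    exact ((hasDerivAt_one_add_mul_rpow r (-1) (by linarith [hx.2])).sub_const 2).add
      (hasDerivAt_one_add_mul_rpow r 1 (by linarith [hx.1]))
  have hF' : HasDerivAt F' (2 * (r * (r - 1))) 0 :=
    (((hasDerivAt_one_add_mul_rpow_zero (r - 1) (-1)).const_mul (-1 * r)).add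
      ((hasDerivAt_one_add_mul_rpow_zero (r - 1) 1).const_mul (1 * r))).congr_deriv (by ring)
  have h := (tendsto_div_sq_of_hasDerivAt hF (by norm_num [F]) (by simp [F']) hF').comp
    tendsto_natCast_inv_nhdsNE_zero
  rw [mul_div_cancel_left₀ _ two_ne_zero] at h
  refine h.congr' ?_
  filter_upwards [eventually_ge_atTop 1] with k hk
  have hk1 : (1 : ℝ) ≤ k := by exact_mod_cast hk
  have hk : (0 : ℝ) < k := by positivity
  have e := rpow_mul_rpow_sub hk r 2
  rw [rpow_two] at e
  rw [sub_eq_add_neg (k : ℝ) 1, add_rpow_eq_rpow_mul r hk (one_add_neg_one_mul_inv_nonneg hk1),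
    add_rpow_eq_rpow_mul r hk (by positivity)]
  simp only [Function.comp_apply, F, inv_pow, div_inv_eq_mul]
  linear_combination (-F (k : ℝ)⁻¹) * e

/-- The gap `δ_k = ξ_k - ξ_{k+1}` between consecutive angles `ξ_k = k^{-1/2}`. -/
noncomputable def invSqrtGap (k : ℕ) : ℝ :=
  (k : ℝ) ^ (-(1 : ℝ) / 2) - ((k : ℝ) + 1) ^ (-(1 : ℝ) / 2)

theorem invSqrtGap_pred {k : ℕ} (hk : 1 ≤ k) :
    invSqrtGap (k - 1) = ((k : ℝ) - 1) ^ (-(1 : ℝ) / 2) - (k : ℝ) ^ (-(1 : ℝ) / 2) := by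
  rw [invSqrtGap, Nat.cast_sub hk, Nat.cast_one, sub_add_cancel]

theorem tendsto_invSqrtGap_mul :
    Tendsto (fun k : ℕ => invSqrtGap k * (k : ℝ) ^ ((3 : ℝ) / 2)) atTop (𝓝 (1 / 2)) := by
  convert tendsto_rpow_sub_rpow_succ_mul (-(1 : ℝ) / 2) using 2 <;> norm_num [invSqrtGap]

theorem tendsto_invSqrtGap_pred_mul :
    Tendsto (fun k : ℕ => invSqrtGap (k - 1) * (k : ℝ) ^ ((3 : ℝ) / 2)) atTop (𝓝 (1 / 2)) := by
  convert (tendsto_rpow_pred_sub_rpow_mul (-(1 : ℝ) / 2)).congr' ?_ using 2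
  · norm_num
  · filter_upwards [eventually_ge_atTop 1] with k hk
    norm_num [invSqrtGap_pred hk]

theorem tendsto_invSqrtGap_pred_sub_mul :
    Tendsto (fun k : ℕ => (invSqrtGap (k - 1) - invSqrtGap k) * (k : ℝ) ^ ((5 : ℝ) / 2)) atTop
      (𝓝 (3 / 4)) := by
  convert (tendsto_rpow_pred_sub_two_mul_rpow_add_rpow_succ_mul (-(1 : ℝ) / 2)).congr' ?_ using 2
  · norm_num
  · filter_upwards [eventually_ge_atTop 1] with k hk
    rw [invSqrtGap_pred hk, invSqrtGap, show (2 : ℝ) - -1 / 2 = 5 / 2 by norm_num]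
    ring

theorem hasDerivAt_two_mul_arcsin_mul_sin_half (a : ℝ) :
    HasDerivAt (fun x => 2 * arcsin (a * sin (x / 2))) a 0 := by
  have hsin : HasDerivAt (fun x => a * sin (x / 2)) (a * (1 / 2)) 0 := by
    simpa using (((hasDerivAt_id (0 : ℝ)).div_const 2).sin).const_mul a
  have h := ((hasDerivAt_arcsin (x := 0) (by norm_num) (by norm_num)).comp_of_eq 0 hsin
    (by simp)).const_mul 2
  exact h.congr_deriv (by norm_num; ring)

theorem arcsin_div_sqrt_sq_add_sq {x y : ℝ} (hx : 0 < x) :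
    arcsin (y / √(x ^ 2 + y ^ 2)) = arctan (y / x) := by
  rw [arctan_eq_arcsin]
  congr 1
  rw [show 1 + (y / x) ^ 2 = (x ^ 2 + y ^ 2) / x ^ 2 by field_simp, sqrt_div' _ (sq_nonneg x),
    sqrt_sq hx.le, div_div_div_cancel_right₀ hx.ne']

theorem cos_mul_cos_sq_sub_cos_mul_cos_sq {a b t t' c : ℝ} (ht : sin t = c * sin a)
    (ht' : sin t' = c * sin b) :
    (cos a * cos t') ^ 2 - (cos t * cos b) ^ 2 = (1 - c ^ 2) * (sin (b + a) * sin (b - a)) := by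
  rw [sin_add, sin_sub]
  linear_combination cos a ^ 2 * sin_sq_add_cos_sq t' - cos a ^ 2 * (sin t' + c * sin b) * ht'
    - cos b ^ 2 * sin_sq_add_cos_sq t + cos b ^ 2 * (sin t + c * sin a) * ht
    - cos a ^ 2 * sin_sq_add_cos_sq b + cos b ^ 2 * sin_sq_add_cos_sq a

section Sequences

variable {ι : Type*} {l : Filter ι}

theorem tendsto_mul_of_sin_half_eq {θ δ s : ι → ℝ} {a c : ℝ}
    (hθ : ∀ᶠ i in l, θ i ∈ Icc (-π) π) (hsin : ∀ᶠ i in l, sin (θ i / 2) = a * sin (δ i / 2))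
    (hδ : Tendsto (fun i => δ i * s i) l (𝓝 c)) (hs : Tendsto s l atTop) :
    Tendsto (fun i => θ i * s i) l (𝓝 (a * c)) := by
  refine ((hasDerivAt_two_mul_arcsin_mul_sin_half a).tendsto_comp_mul (by simp) hδ hs).congr' ?_
  filter_upwards [hθ, hsin] with i hθi hsini
  rw [← hsini, arcsin_sin (by linarith [hθi.1]) (by linarith [hθi.2])]
  ring

theorem tendsto_sin_add_div_two_mul {u v s : ι → ℝ} {p q : ℝ}
    (hu : Tendsto (fun i => u i * s i) l (𝓝 p)) (hv : Tendsto (fun i => v i * s i) l (𝓝 q))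
    (hs : Tendsto s l atTop) :
    Tendsto (fun i => sin ((u i + v i) / 2) * s i) l (𝓝 ((p + q) / 2)) := by
  have huv : Tendsto (fun i => (u i + v i) / 2 * s i) l (𝓝 ((p + q) / 2)) := by
    convert (hu.add hv).div_const 2 using 1
    ext i
    ring
  simpa using (hasDerivAt_sin 0).tendsto_comp_mul sin_zero huv hs

theorem tendsto_cos_mul_cos_sub_cos_mul_cos_mul {a b t t' s s' : ι → ℝ} {c p q : ℝ}
    (ht : ∀ᶠ i in l, sin (t i) = c * sin (a i)) (ht' : ∀ᶠ i in l, sin (t' i) = c * sin (b i))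
    (hta : Tendsto t l (𝓝 0)) (htb : Tendsto t' l (𝓝 0))
    (hp : Tendsto (fun i => (b i + a i) * s i) l (𝓝 p))
    (hq : Tendsto (fun i => (b i - a i) * s' i) l (𝓝 q))
    (hs : Tendsto s l atTop) (hs' : Tendsto s' l atTop) :
    Tendsto (fun i => (cos (a i) * cos (t' i) - cos (t i) * cos (b i)) * (s i * s' i)) l
      (𝓝 ((1 - c ^ 2) * (p * q) / 2)) := by
  have hsum := tendsto_zero_of_tendsto_mul_atTop hp hs
  have hdiff := tendsto_zero_of_tendsto_mul_atTop hq hs'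
  have ha : Tendsto a l (𝓝 0) := by
    simpa using (hsum.sub hdiff).div_const 2 |>.congr fun i => by ring
  have hb : Tendsto b l (𝓝 0) := by
    simpa using (hsum.add hdiff).div_const 2 |>.congr fun i => by ring
  have hcos : ∀ {u : ι → ℝ}, Tendsto u l (𝓝 0) → Tendsto (fun i => cos (u i)) l (𝓝 1) :=
    fun hu => cos_zero ▸ (continuous_cos.tendsto 0).comp hu
  have hD : Tendsto (fun i => cos (a i) * cos (t' i) + cos (t i) * cos (b i)) l (𝓝 2) := by
    simpa [one_add_one_eq_two] using ((hcos ha).mul (hcos htb)).add ((hcos hta).mul (hcos hb))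
  have h := ((hasDerivAt_sin 0).tendsto_comp_mul sin_zero hp hs).mul
    ((hasDerivAt_sin 0).tendsto_comp_mul sin_zero hq hs')
  rw [cos_zero, one_mul, one_mul] at h
  refine ((h.const_mul (1 - c ^ 2)).div hD two_ne_zero).congr' ?_
  filter_upwards [ht, ht', hD.eventually_ne two_ne_zero] with i hti hti' hDi
  rw [Pi.div_apply, div_eq_iff hDi]
  linear_combination (-(s i * s' i)) * cos_mul_cos_sq_sub_cos_mul_cos_sq hti hti'

theorem tendsto_arcsin_div_sqrt_sq_add_sq_mul {f g s s' : ι → ℝ} {a b : ℝ}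
    (hf : Tendsto (fun i => f i * (s i * s' i)) l (𝓝 a)) (hg : Tendsto (fun i => g i * s i) l (𝓝 b))
    (hb : 0 < b) (hs : Tendsto s l atTop) (hs' : Tendsto s' l atTop) :
    Tendsto (fun i => arcsin (f i / √(g i ^ 2 + f i ^ 2)) * s' i) l (𝓝 (a / b)) := by
  have hu : Tendsto (fun i => f i / g i * s' i) l (𝓝 (a / b)) := by
    refine (hf.div hg hb.ne').congr' ?_
    filter_upwards [hg.eventually_ne hb.ne', hs.eventually_gt_atTop 0] with i hgi hsi
    rw [Pi.div_apply, div_mul_eq_mul_div, div_eq_div_iff hgi (left_ne_zero_of_mul hgi)]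
    ring
  have h := (hasDerivAt_arctan 0).tendsto_comp_mul arctan_zero hu hs'
  rw [zero_pow two_ne_zero, add_zero, div_one, one_mul] at h
  refine h.congr' ?_
  filter_upwards [hg.eventually_const_lt hb, hs.eventually_gt_atTop 0] with i hgi hsi
  rw [arcsin_div_sqrt_sq_add_sq (pos_of_mul_pos_left hgi hsi.le)]

end Sequences

theorem tendsto_cos_mul_cos_sub_cos_mul_cos_mul_invSqrtGap {θ : ℕ → ℝ}
    (hθ : ∀ k : ℕ, 1 ≤ k → sin (θ k / 2) = √2 / 2 * sin (invSqrtGap k / 2))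
    (hθ0 : Tendsto θ atTop (𝓝 0)) :
    Tendsto (fun k : ℕ => (cos (invSqrtGap k / 2) * cos (θ (k - 1) / 2) -
      cos (θ k / 2) * cos (invSqrtGap (k - 1) / 2)) *
        ((k : ℝ) ^ ((3 : ℝ) / 2) * (k : ℝ) ^ ((5 : ℝ) / 2))) atTop (𝓝 (3 / 64)) := by
  have hθ0' : Tendsto (fun k => θ (k - 1)) atTop (𝓝 0) :=
    hθ0.comp (tendsto_sub_atTop_nat 1)
  have hp : Tendsto (fun k : ℕ => (invSqrtGap (k - 1) / 2 + invSqrtGap k / 2) *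
      (k : ℝ) ^ ((3 : ℝ) / 2)) atTop (𝓝 (1 / 2)) := by
    convert (tendsto_invSqrtGap_pred_mul.add tendsto_invSqrtGap_mul).div_const 2 using 1
    · ext k; ring
    · norm_num
  have hq : Tendsto (fun k : ℕ => (invSqrtGap (k - 1) / 2 - invSqrtGap k / 2) *
      (k : ℝ) ^ ((5 : ℝ) / 2)) atTop (𝓝 (3 / 8)) := by
    convert tendsto_invSqrtGap_pred_sub_mul.div_const 2 using 1
    · ext k; ring
    · norm_num
  convert tendsto_cos_mul_cos_sub_cos_mul_cos_mul (eventually_atTop.2 ⟨1, hθ⟩)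
    (eventually_atTop.2 ⟨2, fun k hk => hθ (k - 1) (by omega)⟩)
    (by simpa using hθ0.div_const 2) (by simpa using hθ0'.div_const 2) hp hq
    (tendsto_natCast_rpow_atTop (by norm_num)) (tendsto_natCast_rpow_atTop (by norm_num)) using 2
  rw [div_pow, sq_sqrt zero_le_two]
  norm_num

/-- Asymptotics of the oriented angle `σ_k` between the inward normal of the unit circle and
the normal of the constructed curve at `q_k`: with `sin σ_k = f_k/√(g_k² + f_k²)` one has
`σ_k = b_k k^{-5/2}` with `b_k → 3/16`, i.e. `k^{5/2} σ_k → 3/16`. -/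
theorem stmt_12 (ξ δ θ g f σ : ℕ → ℝ)
    (hξ : ∀ k : ℕ, ξ k = (k : ℝ) ^ (-(1 : ℝ) / 2))
    (hδ : ∀ k : ℕ, δ k = ξ k - ξ (k + 1))
    (hθmem : ∀ k : ℕ, 1 ≤ k → θ k ∈ Set.Ioo 0 (π / 2))
    (hθ : ∀ k : ℕ, 1 ≤ k → Real.sin (θ k / 2) = Real.sqrt 2 / 2 * Real.sin (δ k / 2))
    (hg : ∀ k : ℕ, 2 ≤ k → g k =
      Real.sin (θ k / 2) * Real.cos (θ (k - 1) / 2) +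
        Real.cos (θ k / 2) * Real.sin (θ (k - 1) / 2))
    (hf : ∀ k : ℕ, 2 ≤ k → f k =
      Real.sqrt 2 * (Real.cos (δ k / 2) * Real.cos (θ (k - 1) / 2) -
        Real.cos (θ k / 2) * Real.cos (δ (k - 1) / 2)))
    (hσ : ∀ k : ℕ, 2 ≤ k → σ k = Real.arcsin (f k / Real.sqrt (g k ^ 2 + f k ^ 2))) :
    Tendsto (fun k : ℕ => (k : ℝ) ^ ((5 : ℝ) / 2) * σ k) atTop (nhds (3 / 16)) := by
  obtain rfl : δ = invSqrtGap := funext fun k => by rw [hδ, hξ, hξ, invSqrtGap, Nat.cast_succ]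
  have hs₃ : Tendsto (fun k : ℕ => (k : ℝ) ^ ((3 : ℝ) / 2)) atTop atTop :=
    tendsto_natCast_rpow_atTop (by norm_num)
  have hθIcc : ∀ k, 1 ≤ k → θ k ∈ Icc (-π) π := fun k hk =>
    ⟨by linarith [(hθmem k hk).1, pi_pos], by linarith [(hθmem k hk).2, pi_pos]⟩
  have hθ₁ := tendsto_mul_of_sin_half_eq (eventually_atTop.2 ⟨1, hθIcc⟩)
    (eventually_atTop.2 ⟨1, hθ⟩) tendsto_invSqrtGap_mul hs₃
  have hθ₀ := tendsto_mul_of_sin_half_eq (s := fun k : ℕ => (k : ℝ) ^ ((3 : ℝ) / 2))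
    (eventually_atTop.2 ⟨2, fun k hk => hθIcc (k - 1) (by omega)⟩)
    (eventually_atTop.2 ⟨2, fun k hk => hθ (k - 1) (by omega)⟩) tendsto_invSqrtGap_pred_mul hs₃
  have hg' := (tendsto_sin_add_div_two_mul hθ₁ hθ₀ hs₃).congr'
      (f₂ := fun k => g k * (k : ℝ) ^ ((3 : ℝ) / 2)) <| by
    filter_upwards [eventually_ge_atTop 2] with k hk
    rw [hg k hk, ← sin_add, ← add_div]
  have hf' := ((tendsto_cos_mul_cos_sub_cos_mul_cos_mul_invSqrtGap hθ
    (tendsto_zero_of_tendsto_mul_atTop hθ₁ hs₃)).const_mul √2).congr'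
      (f₂ := fun k => f k * ((k : ℝ) ^ ((3 : ℝ) / 2) * (k : ℝ) ^ ((5 : ℝ) / 2))) <| by
    filter_upwards [eventually_ge_atTop 2] with k hk
    rw [hf k hk, mul_assoc]
  convert (tendsto_arcsin_div_sqrt_sq_add_sq_mul hf' hg' (by positivity) hs₃
    (tendsto_natCast_rpow_atTop (by norm_num))).congr' ?_ using 2
  · field_simp
    norm_num
  · filter_upwards [eventually_ge_atTop 2] with k hk
    rw [hσ k hk, mul_comm]
end

section
/- (Halpern) Let ξ_k = k^{−1/2} and q_k = (cos ξ_k, sin ξ_k) on the unit circle S¹ ⊂ ℝ². Suppose that at each point q_k a unit vector w_k is assigned, and let σ_k be the oriented angle measured counterclockwise from z_k = −q_k to w_k. If |σ_k| = b_k k^{−5/2} with b_k → b > 0 as k → ∞, then there exist an integer k₀ > 0 and a 2π-periodic, positive, C²-smooth function ρ : ℝ → ℝ such that the closed curve γ(ξ) = ρ(ξ)(cos ξ, sin ξ) is C²-smooth with everywhere positive curvature (hence strictly convex), ρ(ξ_k) = 1 for every k ≥ k₀ (so γ passes through q_k), and the inward unit normal of γ at the point q_k equals w_k for every k ≥ k₀.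 -/
/-!
Write `ρ = 1 + u`, where `u` is a sum of rescaled copies of a fixed bump that equals `x` near `0`:
one at each `ξ_k`, of width `h_k = ξ_k³ / 8` and slope `d_k = -tan σ_k`. Since `t⁻²` rounds to
`k` on the `k`-th window, the windows are disjoint, so `u(ξ_k) = 0` and `u'(ξ_k) = d_k`, which
makes the normal at `q_k` equal to `w_k`. The hypothesis gives `d_k = o(ξ_k⁴)`, so on the `k`-th
window, where `ξ_k < 2t`, the functions `u`, `u'`, `u''` are of size `d_k h_k`, `d_k`,
`d_k / h_k`, that is `O(t²)`, `O(t²)`, `O(t)`. Hence `u` is `C²` also at the accumulation point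
`0`, and after discarding finitely many `k` the functions `u` and `u''` are so small that
`ρ² + 2ρ'² - ρρ'' > 0`. Finally `u` is supported in `[0, 2]`, so it can be made `2π`-periodic.
-/

open Real Filter

noncomputable section

open Function Set Topology Metric
open scoped ContDiff

namespace Halpern

def bump (x : ℝ) : ℝ := x * smoothTransition (2 - 4 * x ^ 2)

theorem contDiff_bump : ContDiff ℝ ∞ bump := by
  unfold bump
  fun_prop

theorem bump_eq_self {x : ℝ} (hx : |x| ≤ 1 / 2) : bump x = x := by
  have : 1 ≤ 2 - 4 * x ^ 2 := by nlinarith [sq_abs x, abs_nonneg x]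
  simp [bump, smoothTransition.one_of_one_le this]

theorem deriv_bump_zero : deriv bump 0 = 1 := by
  have : bump =ᶠ[𝓝 0] id := by
    filter_upwards [Metric.ball_mem_nhds (0 : ℝ) one_half_pos] with x hx
    exact bump_eq_self (by simpa using (Metric.mem_ball.1 hx).le)
  simp [this.deriv_eq]

theorem tsupport_bump : tsupport bump ⊆ Icc (-(3 / 4)) (3 / 4) := by
  refine closure_minimal (fun x hx => ?_) isClosed_Icc
  rw [mem_Icc, ← abs_le]
  by_contra h
  have : 2 - 4 * x ^ 2 ≤ 0 := by nlinarith [sq_abs x]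
  exact hx (by simp [bump, smoothTransition.zero_of_nonpos this])

theorem tsupport_iterate_deriv_bump (n : ℕ) :
    tsupport (deriv^[n] bump) ⊆ Icc (-(3 / 4)) (3 / 4) := by
  induction n with
  | zero => exact tsupport_bump
  | succ n ih =>
    rw [iterate_succ_apply']
    exact tsupport_deriv_subset.trans ih

theorem support_iterate_deriv_bump (n : ℕ) : support (deriv^[n] bump) ⊆ Ioo (-1) 1 :=
  subset_tsupport _ |>.trans <| (tsupport_iterate_deriv_bump n).trans
    (Icc_subset_Ioo (by norm_num) (by norm_num))

theorem hasDerivAt_iterate_deriv_bump (n : ℕ) (x : ℝ) :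
    HasDerivAt (deriv^[n] bump) (deriv^[n + 1] bump x) x := by
  rw [iterate_succ_apply']
  exact ((contDiff_bump.iterate_deriv n).differentiable (by simp) x).hasDerivAt

theorem exists_abs_iterate_deriv_bump_le (n : ℕ) : ∃ C, ∀ x, |deriv^[n] bump x| ≤ C :=
  (contDiff_bump.iterate_deriv n).continuous.bounded_above_of_compact_support
    (isCompact_Icc.of_isClosed_subset (isClosed_tsupport _) (tsupport_iterate_deriv_bump n))

def xi (k : ℕ) : ℝ := (k : ℝ) ^ (-(1 : ℝ) / 2)

def radius (k : ℕ) : ℝ := xi k ^ 3 / 8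

theorem xi_zero : xi 0 = 0 := by simp [xi]

theorem xi_nonneg (k : ℕ) : 0 ≤ xi k := by unfold xi; positivity

theorem xi_pos {k : ℕ} (hk : k ≠ 0) : 0 < xi k := by unfold xi; positivity

@[simp]
theorem radius_zero : radius 0 = 0 := by simp [radius, xi_zero]

theorem radius_pos {k : ℕ} (hk : k ≠ 0) : 0 < radius k := by
  have := xi_pos hk; unfold radius; positivity

theorem xi_sq {k : ℕ} : xi k ^ 2 = (k : ℝ)⁻¹ := by
  rw [xi, ← Real.rpow_mul_natCast (Nat.cast_nonneg k)]
  norm_num [Real.rpow_neg_one]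

theorem xi_le_one (k : ℕ) : xi k ≤ 1 := by
  rcases Nat.eq_zero_or_pos k with rfl | hk
  · simp [xi_zero]
  · have : xi k ^ 2 ≤ 1 := by rw [xi_sq]; exact inv_le_one_of_one_le₀ (by exact_mod_cast hk)
    nlinarith [xi_nonneg k]

theorem tendsto_xi : Tendsto xi atTop (𝓝 0) := by
  have := (tendsto_rpow_neg_atTop (y := 1 / 2) one_half_pos).comp tendsto_natCast_atTop_atTop
  refine this.congr fun k => ?_
  simp [xi, neg_div]

theorem rpow_mul_xi_pow_five {k : ℕ} (hk : k ≠ 0) : (k : ℝ) ^ ((5 : ℝ) / 2) * xi k ^ 5 = 1 := by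
  rw [xi, ← Real.rpow_mul_natCast (Nat.cast_nonneg k), ← Real.rpow_add (by positivity)]
  norm_num

theorem ne_zero_of_mem_ball_xi {k : ℕ} {t : ℝ} (ht : t ∈ ball (xi k) (radius k)) : k ≠ 0 := by
  rintro rfl
  simp at ht

theorem abs_sub_xi_lt {k : ℕ} {t : ℝ} (ht : t ∈ ball (xi k) (radius k)) :
    |t - xi k| < xi k / 8 := by
  calc |t - xi k| < radius k := ht
    _ ≤ xi k / 8 := by
      unfold radius; gcongr; exact pow_le_of_le_one (xi_nonneg k) (xi_le_one k) (by norm_num)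

theorem xi_lt_two_mul_of_mem_ball {k : ℕ} {t : ℝ} (ht : t ∈ ball (xi k) (radius k)) :
    xi k < 2 * t ∧ t < 2 * xi k := by
  have := xi_pos (ne_zero_of_mem_ball_xi ht)
  have := abs_lt.1 (abs_sub_xi_lt ht)
  constructor <;> linarith

theorem abs_inv_sq_sub_lt {k : ℕ} {t : ℝ} (ht : t ∈ ball (xi k) (radius k)) :
    |(t ^ 2)⁻¹ - k| < 1 / 2 := by
  set x := xi k
  have hx : 0 < x := xi_pos (ne_zero_of_mem_ball_xi ht)
  have hk : (k : ℝ) = (x ^ 2)⁻¹ := by rw [xi_sq, inv_inv]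
  obtain ⟨hl, hr⟩ := abs_lt.1 (abs_sub_xi_lt ht)
  have htpos : 0 < t := by linarith
  have hrad : |x - t| < x ^ 3 / 8 := by rw [abs_sub_comm]; exact ht
  have e : (t ^ 2)⁻¹ - k = (x - t) * (x + t) / (t ^ 2 * x ^ 2) := by
    rw [hk]; field_simp; ring
  rw [e, abs_div, abs_mul, abs_of_pos (by positivity : 0 < t ^ 2 * x ^ 2),
    div_lt_iff₀ (by positivity), abs_of_pos (by linarith : 0 < x + t)]
  calc |x - t| * (x + t) ≤ x ^ 3 / 8 * (17 * x / 8) := by gcongr; linarith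
    _ < 1 / 2 * ((7 * x / 8) ^ 2 * x ^ 2) := by nlinarith [pow_pos hx 4]
    _ ≤ 1 / 2 * (t ^ 2 * x ^ 2) := by gcongr; linarith

theorem eq_of_mem_ball_xi {j k : ℕ} {t : ℝ} (hj : t ∈ ball (xi j) (radius j))
    (hk : t ∈ ball (xi k) (radius k)) : j = k := by
  have h := abs_sub_lt_iff.1 (abs_inv_sq_sub_lt hj)
  have h' := abs_sub_lt_iff.1 (abs_inv_sq_sub_lt hk)
  have : (j : ℝ) < k + 1 := by linarith
  have : (k : ℝ) < j + 1 := by linarith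
  norm_cast at *
  omega

theorem exists_forall_notMem_ball_xi {s : ℝ} (hs : s ≠ 0) :
    ∃ K, ∀ᶠ t in 𝓝 s, ∀ k, K ≤ k → t ∉ ball (xi k) (radius k) := by
  have hs' : 0 < |s| / 4 := by positivity
  obtain ⟨K, hK⟩ := eventually_atTop.1 (tendsto_xi.eventually (gt_mem_nhds hs'))
  refine ⟨K, ?_⟩
  filter_upwards [ball_mem_nhds s (by positivity : 0 < |s| / 2)] with t hts k hk htk
  have h1 := xi_lt_two_mul_of_mem_ball htk
  have h2 : |s| - |t| < |s| / 2 := by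
    have := abs_sub_abs_le_abs_sub s t
    rw [abs_sub_comm] at this
    exact this.trans_lt hts
  have := hK k hk
  rw [abs_of_pos (show 0 < t by linarith [xi_nonneg k])] at h2
  linarith

/-- The `k = 0` term is junk (`ξ_0 = 0 = radius 0` and `x / 0 = 0`), which is why the coefficient
sequences below are required to vanish at `0`. -/
def bumpSeries (φ : ℝ → ℝ) (a : ℕ → ℝ) (t : ℝ) : ℝ := ∑' k, a k * φ ((t - xi k) / radius k)

section BumpSeries

variable {φ φ' : ℝ → ℝ} {a : ℕ → ℝ}

theorem bump_term_eq_zero (hφ : support φ ⊆ Ioo (-1) 1) (ha : a 0 = 0) {k : ℕ} {t : ℝ}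
    (ht : t ∉ ball (xi k) (radius k)) : a k * φ ((t - xi k) / radius k) = 0 := by
  rcases eq_or_ne k 0 with rfl | hk
  · simp [ha]
  have hr := radius_pos hk
  suffices φ ((t - xi k) / radius k) = 0 by rw [this, mul_zero]
  refine notMem_support.1 fun h => ht ?_
  have := abs_lt.2 (hφ h)
  rwa [abs_div, abs_of_pos hr, div_lt_one hr, ← Real.dist_eq] at this

theorem bumpSeries_eq_of_mem_ball (hφ : support φ ⊆ Ioo (-1) 1) (ha : a 0 = 0) {k : ℕ} {t : ℝ}
    (ht : t ∈ ball (xi k) (radius k)) : bumpSeries φ a t = a k * φ ((t - xi k) / radius k) :=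
  tsum_eq_single k fun _ hj => bump_term_eq_zero hφ ha fun hj' => hj (eq_of_mem_ball_xi hj' ht)

theorem bumpSeries_eq_zero (hφ : support φ ⊆ Ioo (-1) 1) (ha : a 0 = 0) {t : ℝ}
    (ht : ∀ k, t ∉ ball (xi k) (radius k)) : bumpSeries φ a t = 0 := by
  simp [bumpSeries, bump_term_eq_zero hφ ha (ht _)]

theorem bumpSeries_eq_sum (hφ : support φ ⊆ Ioo (-1) 1) (ha : a 0 = 0) {K : ℕ} {t : ℝ}
    (ht : ∀ k, K ≤ k → t ∉ ball (xi k) (radius k)) :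
    bumpSeries φ a t = ∑ k ∈ Finset.range K, a k * φ ((t - xi k) / radius k) :=
  tsum_eq_sum fun k hk => bump_term_eq_zero hφ ha (ht k (by simpa using hk))

theorem support_bumpSeries (hφ : support φ ⊆ Ioo (-1) 1) (ha : a 0 = 0) :
    support (bumpSeries φ a) ⊆ Icc 0 2 := by
  intro t ht
  by_cases h : ∃ k, t ∈ ball (xi k) (radius k)
  · obtain ⟨k, hk⟩ := h
    have := xi_lt_two_mul_of_mem_ball hk
    constructor <;> linarith [xi_nonneg k, xi_le_one k]
  · exact absurd (bumpSeries_eq_zero hφ ha (not_exists.1 h)) ht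

theorem abs_bumpSeries_le (hφ : support φ ⊆ Ioo (-1) 1) (ha : a 0 = 0) {C B t : ℝ}
    (hC : ∀ x, |φ x| ≤ C) (hB : 0 ≤ B) (hab : ∀ k, t ∈ ball (xi k) (radius k) → |a k| ≤ B) :
    |bumpSeries φ a t| ≤ C * B := by
  have hC0 : 0 ≤ C := (abs_nonneg _).trans (hC 0)
  by_cases h : ∃ k, t ∈ ball (xi k) (radius k)
  · obtain ⟨k, hk⟩ := h
    rw [bumpSeries_eq_of_mem_ball hφ ha hk, abs_mul, mul_comm]
    exact mul_le_mul (hC _) (hab k hk) (abs_nonneg _) hC0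
  · rw [bumpSeries_eq_zero hφ ha (not_exists.1 h), abs_zero]
    positivity

theorem hasDerivAt_bumpSeries (hφ : support φ ⊆ Ioo (-1) 1) (hφ' : support φ' ⊆ Ioo (-1) 1)
    (hderiv : ∀ x, HasDerivAt φ (φ' x) x) (ha : a 0 = 0) {s : ℝ} (hs : s ≠ 0) :
    HasDerivAt (bumpSeries φ a) (bumpSeries φ' (a / radius) s) s := by
  obtain ⟨K, hK⟩ := exists_forall_notMem_ball_xi hs
  rw [bumpSeries_eq_sum hφ' (by simp [ha]) hK.self_of_nhds]
  refine HasDerivAt.congr_of_eventuallyEq ?_ (hK.mono fun t ht => bumpSeries_eq_sum hφ ha ht)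
  refine HasDerivAt.fun_sum fun k _ => ?_
  have hin : HasDerivAt (fun t => (t - xi k) / radius k) (1 / radius k) s :=
    ((hasDerivAt_id' s).sub_const _).div_const _
  refine (((hderiv _).comp s hin).const_mul (a k)).congr_deriv ?_
  simp only [Pi.div_apply]
  ring

end BumpSeries

theorem hasDerivAt_zero_of_abs_le_sq {F : ℝ → ℝ} {K : ℝ} (h : ∀ t, |F t| ≤ K * t ^ 2) :
    HasDerivAt F 0 0 := by
  have h0 : F 0 = 0 := abs_eq_zero.1 (le_antisymm (by simpa using h 0) (abs_nonneg _))
  rw [hasDerivAt_iff_isLittleO_nhds_zero]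
  simp only [zero_add, h0, sub_zero, smul_zero]
  refine (Asymptotics.IsBigO.of_bound K (Eventually.of_forall fun t => ?_)).trans_isLittleO
    (Asymptotics.isLittleO_pow_id one_lt_two)
  simpa [abs_of_nonneg (sq_nonneg t)] using h t

theorem continuousAt_zero_of_abs_le {F : ℝ → ℝ} {K : ℝ} (h : ∀ t, |F t| ≤ K * |t|) :
    ContinuousAt F 0 := by
  have h0 : F 0 = 0 := abs_eq_zero.1 (le_antisymm (by simpa using h 0) (abs_nonneg _))
  exact continuousAt_of_locally_lipschitz one_pos K fun t _ => by
    simpa [h0, Real.dist_eq] using h t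

theorem exists_abs_bumpSeries_iterate_deriv_le (n : ℕ) :
    ∃ C, ∀ {a : ℕ → ℝ} {B t : ℝ}, a 0 = 0 → 0 ≤ B →
      (∀ k, t ∈ ball (xi k) (radius k) → |a k| ≤ B) → |bumpSeries (deriv^[n] bump) a t| ≤ C * B :=
  (exists_abs_iterate_deriv_bump_le n).imp fun _ hC _ _ _ ha hB hab =>
    abs_bumpSeries_le (support_iterate_deriv_bump n) ha hC hB hab

def perturbation (d : ℕ → ℝ) : ℝ → ℝ := bumpSeries bump (d * radius)

def perturbationDeriv (d : ℕ → ℝ) : ℝ → ℝ := bumpSeries (deriv bump) d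

def perturbationDeriv2 (d : ℕ → ℝ) : ℝ → ℝ := bumpSeries (deriv^[2] bump) (d / radius)

section Perturbation

variable {d : ℕ → ℝ} {ε : ℝ}

theorem perturbation_xi {k : ℕ} (hk : k ≠ 0) : perturbation d (xi k) = 0 := by
  rw [perturbation, bumpSeries_eq_of_mem_ball (φ := bump) (support_iterate_deriv_bump 0) (by simp)
    (mem_ball_self (radius_pos hk))]
  simp [bump]

theorem perturbationDeriv_xi (hd0 : d 0 = 0) {k : ℕ} (hk : k ≠ 0) :
    perturbationDeriv d (xi k) = d k := by
  rw [perturbationDeriv, bumpSeries_eq_of_mem_ball (φ := deriv bump)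
    (support_iterate_deriv_bump 1) hd0 (mem_ball_self (radius_pos hk))]
  simp [deriv_bump_zero]

theorem support_perturbation : support (perturbation d) ⊆ Icc 0 2 :=
  support_bumpSeries (support_iterate_deriv_bump 0) (by simp)

theorem support_perturbationDeriv (hd0 : d 0 = 0) : support (perturbationDeriv d) ⊆ Icc 0 2 :=
  support_bumpSeries (support_iterate_deriv_bump 1) hd0

theorem support_perturbationDeriv2 : support (perturbationDeriv2 d) ⊆ Icc 0 2 :=
  support_bumpSeries (support_iterate_deriv_bump 2) (by simp)

theorem mul_radius_div_radius (hd0 : d 0 = 0) : d * radius / radius = d := by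
  funext k
  rcases eq_or_ne k 0 with rfl | hk
  · simp [hd0]
  · simp [(radius_pos hk).ne']

variable (hd : ∀ k, |d k| ≤ ε * xi k ^ 4)
include hd

theorem eq_zero_of_abs_le_mul_xi_pow : d 0 = 0 :=
  abs_eq_zero.1 (le_antisymm (by simpa [xi_zero] using hd 0) (abs_nonneg _))

theorem nonneg_of_abs_le_mul_xi_pow : 0 ≤ ε :=
  (abs_nonneg _).trans (by simpa [xi] using hd 1)

theorem abs_le_of_mem_ball {k : ℕ} {t : ℝ} (ht : t ∈ ball (xi k) (radius k)) :
    |d k| ≤ 4 * ε * t ^ 2 := by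
  have hx := xi_pos (ne_zero_of_mem_ball_xi ht)
  have hε := nonneg_of_abs_le_mul_xi_pow hd
  calc |d k| ≤ ε * xi k ^ 4 := hd k
    _ ≤ ε * xi k ^ 2 :=
      mul_le_mul_of_nonneg_left (pow_le_pow_of_le_one hx.le (xi_le_one k) (by norm_num)) hε
    _ ≤ ε * (2 * t) ^ 2 := by gcongr; exact (xi_lt_two_mul_of_mem_ball ht).1.le
    _ = 4 * ε * t ^ 2 := by ring

theorem abs_mul_radius_le_of_mem_ball {k : ℕ} {t : ℝ} (ht : t ∈ ball (xi k) (radius k)) :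
    |(d * radius) k| ≤ ε * t ^ 2 ∧ |(d * radius) k| ≤ ε := by
  have hx := xi_pos (ne_zero_of_mem_ball_xi ht)
  have hx7 : xi k ^ 7 ≤ xi k ^ 2 := pow_le_pow_of_le_one hx.le (xi_le_one k) (by norm_num)
  have hx2 : xi k ^ 2 ≤ 1 := pow_le_one₀ hx.le (xi_le_one k)
  have hxt := (xi_lt_two_mul_of_mem_ball ht).1
  have hε := nonneg_of_abs_le_mul_xi_pow hd
  have h : |(d * radius) k| ≤ ε * xi k ^ 7 / 8 := by
    rw [Pi.mul_apply, abs_mul, abs_of_pos (radius_pos (ne_zero_of_mem_ball_xi ht)), radius]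
    calc _ ≤ ε * xi k ^ 4 * (xi k ^ 3 / 8) := by gcongr; exact hd k
      _ = _ := by ring
  have hx2t : xi k ^ 2 ≤ 4 * t ^ 2 := by nlinarith
  constructor
  · nlinarith [mul_le_mul_of_nonneg_left (hx7.trans hx2t) hε]
  · nlinarith [mul_le_mul_of_nonneg_left (hx7.trans hx2) hε]

theorem abs_div_radius_le_of_mem_ball {k : ℕ} {t : ℝ} (ht : t ∈ ball (xi k) (radius k)) :
    |(d / radius) k| ≤ 16 * ε * |t| ∧ |(d / radius) k| ≤ 8 * ε := by
  have hx := xi_pos (ne_zero_of_mem_ball_xi ht)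
  have hxt := (xi_lt_two_mul_of_mem_ball ht).1
  have hε := nonneg_of_abs_le_mul_xi_pow hd
  have h : |(d / radius) k| ≤ 8 * ε * xi k := by
    rw [Pi.div_apply, abs_div, abs_of_pos (radius_pos (ne_zero_of_mem_ball_xi ht)), radius,
      div_le_iff₀ (by positivity)]
    calc _ ≤ ε * xi k ^ 4 := hd k
      _ = _ := by ring
  rw [abs_of_pos (by linarith : 0 < t)]
  constructor
  · nlinarith
  · nlinarith [xi_le_one k]

theorem abs_perturbationDeriv_le_sq : ∃ C, ∀ t, |perturbationDeriv d t| ≤ C * (4 * ε * t ^ 2) := by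
  obtain ⟨C, hC⟩ := exists_abs_bumpSeries_iterate_deriv_le 1
  have hε := nonneg_of_abs_le_mul_xi_pow hd
  exact ⟨C, fun t => hC (eq_zero_of_abs_le_mul_xi_pow hd) (by positivity)
    fun k hk => abs_le_of_mem_ball hd hk⟩

theorem abs_perturbationDeriv2_le_abs :
    ∃ C, ∀ t, |perturbationDeriv2 d t| ≤ C * (16 * ε * |t|) := by
  obtain ⟨C, hC⟩ := exists_abs_bumpSeries_iterate_deriv_le 2
  have hε := nonneg_of_abs_le_mul_xi_pow hd
  exact ⟨C, fun t => hC (by simp) (by positivity)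
    fun k hk => (abs_div_radius_le_of_mem_ball hd hk).1⟩

theorem hasDerivAt_perturbation (t : ℝ) :
    HasDerivAt (perturbation d) (perturbationDeriv d t) t := by
  have hd0 := eq_zero_of_abs_le_mul_xi_pow hd
  rcases eq_or_ne t 0 with rfl | ht
  · obtain ⟨C, hC⟩ := exists_abs_bumpSeries_iterate_deriv_le 0
    obtain ⟨C', hC'⟩ := abs_perturbationDeriv_le_sq hd
    rw [show perturbationDeriv d 0 = 0 by simpa using hC' 0]
    have hε := nonneg_of_abs_le_mul_xi_pow hd
    exact hasDerivAt_zero_of_abs_le_sq (K := C * ε) fun t => (hC (by simp) (by positivity)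
      fun k hk => (abs_mul_radius_le_of_mem_ball hd hk).1).trans_eq (by ring)
  · have := hasDerivAt_bumpSeries (support_iterate_deriv_bump 0) (support_iterate_deriv_bump 1)
      (hasDerivAt_iterate_deriv_bump 0) (by simp) ht (a := d * radius)
    rwa [mul_radius_div_radius hd0] at this

theorem hasDerivAt_perturbationDeriv (t : ℝ) :
    HasDerivAt (perturbationDeriv d) (perturbationDeriv2 d t) t := by
  rcases eq_or_ne t 0 with rfl | ht
  · obtain ⟨C, hC⟩ := abs_perturbationDeriv_le_sq hd
    obtain ⟨C', hC'⟩ := abs_perturbationDeriv2_le_abs hd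
    rw [show perturbationDeriv2 d 0 = 0 by simpa using hC' 0]
    exact hasDerivAt_zero_of_abs_le_sq (K := C * (4 * ε)) fun t => (hC t).trans_eq (by ring)
  · exact hasDerivAt_bumpSeries (support_iterate_deriv_bump 1) (support_iterate_deriv_bump 2)
      (hasDerivAt_iterate_deriv_bump 1) (eq_zero_of_abs_le_mul_xi_pow hd) ht

theorem continuous_perturbationDeriv2 : Continuous (perturbationDeriv2 d) := by
  refine continuous_iff_continuousAt.2 fun t => ?_
  rcases eq_or_ne t 0 with rfl | ht
  · obtain ⟨C, hC⟩ := abs_perturbationDeriv2_le_abs hd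
    exact continuousAt_zero_of_abs_le (K := C * (16 * ε)) fun t => (hC t).trans_eq (by ring)
  · exact (hasDerivAt_bumpSeries (support_iterate_deriv_bump 2) (support_iterate_deriv_bump 3)
      (hasDerivAt_iterate_deriv_bump 2) (by simp) ht).continuousAt

end Perturbation

theorem exists_abs_perturbation_le : ∃ C, ∀ {d : ℕ → ℝ} {ε : ℝ}, (∀ k, |d k| ≤ ε * xi k ^ 4) →
    ∀ t, |perturbation d t| ≤ C * ε ∧ |perturbationDeriv2 d t| ≤ C * ε := by
  obtain ⟨C₀, hC₀⟩ := exists_abs_bumpSeries_iterate_deriv_le 0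
  obtain ⟨C₂, hC₂⟩ := exists_abs_bumpSeries_iterate_deriv_le 2
  refine ⟨max C₀ (8 * C₂), fun {d ε} hd t => ?_⟩
  have hε := nonneg_of_abs_le_mul_xi_pow hd
  constructor
  · calc _ ≤ C₀ * ε := hC₀ (by simp) hε fun k hk => (abs_mul_radius_le_of_mem_ball hd hk).2
      _ ≤ _ := by gcongr; exact le_max_left _ _
  · calc _ ≤ C₂ * (8 * ε) := hC₂ (by simp) (by positivity)
          fun k hk => (abs_div_radius_le_of_mem_ball hd hk).2
      _ = 8 * C₂ * ε := by ring
      _ ≤ _ := by gcongr; exact le_max_right _ _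

def periodize (p : ℝ) (φ : ℝ → ℝ) (s : ℝ) : ℝ := ∑' m : ℤ, φ (s + m * p)

section Periodize

variable {p a b : ℝ} {φ φ' : ℝ → ℝ}

theorem periodic_periodize (p : ℝ) (φ : ℝ → ℝ) : Periodic (periodize p φ) p := fun s => by
  refine Eq.trans ?_ ((Equiv.addRight (1 : ℤ)).tsum_eq fun m : ℤ => φ (s + m * p))
  simp only [periodize, Equiv.coe_addRight, Int.cast_add, Int.cast_one]
  congr 1 with m
  ring_nf

theorem periodize_eq_of_mem (hφ : support φ ⊆ Icc a b) (hab : b - a < p) {x : ℝ}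
    (hx : x ∈ Icc a b) : periodize p φ x = φ x := by
  rw [periodize, tsum_eq_single 0 fun m hm => notMem_support.1 fun h => ?_]
  · simp
  have h := hφ h
  have hp : 0 < p := by linarith [hx.1, hx.2]
  rcases lt_or_gt_of_ne hm with hm | hm
  · have : (m : ℝ) ≤ -1 := by exact_mod_cast Int.le_sub_one_of_lt hm
    nlinarith [h.1, hx.2, mul_le_mul_of_nonneg_right this hp.le]
  · have : (1 : ℝ) ≤ m := by exact_mod_cast hm
    nlinarith [h.2, hx.1, mul_le_mul_of_nonneg_right this hp.le]

/-- The translates of `[a, b]` are separated by gaps of length `p - (b - a)`. -/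
theorem exists_eventually_periodize_eq (hp : 0 < p) (hab : b - a < p) (s : ℝ) :
    ∃ m : ℤ, ∀ᶠ t in 𝓝 s, ∀ φ : ℝ → ℝ, support φ ⊆ Icc a b → periodize p φ t = φ (t + m * p) := by
  obtain ⟨δ, hδ, hδp⟩ : ∃ δ, 0 < δ ∧ 2 * δ = p - (b - a) :=
    ⟨(p - (b - a)) / 2, by linarith, by ring⟩
  obtain ⟨n, hn⟩ : ∃ n : ℤ, s - n * p ∈ Ico (a - δ) (a - δ + p) :=
    ⟨_, by simpa only [zsmul_eq_mul] using sub_toIcoDiv_zsmul_mem_Ico hp (a - δ) s⟩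
  refine ⟨-n, ?_⟩
  filter_upwards [ball_mem_nhds s hδ] with t ht φ hφ
  rw [periodize, tsum_eq_single (-n) fun m hm => notMem_support.1 fun h => ?_]
  have h := hφ h
  have ht := abs_lt.1 (Real.dist_eq t s ▸ mem_ball.1 ht)
  rcases lt_or_gt_of_ne hm with hm | hm
  · have : (m : ℝ) + n ≤ -1 := by exact_mod_cast (by omega : m + n ≤ -1)
    nlinarith [h.1, hn.2, mul_le_mul_of_nonneg_right this hp.le]
  · have : (1 : ℝ) ≤ m + n := by exact_mod_cast (by omega : 1 ≤ m + n)
    nlinarith [h.2, hn.1, mul_le_mul_of_nonneg_right this hp.le]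

variable (hp : 0 < p) (hab : b - a < p) (hφ : support φ ⊆ Icc a b)
include hp hab hφ

theorem hasDerivAt_periodize (hφ' : support φ' ⊆ Icc a b) (hderiv : ∀ x, HasDerivAt φ (φ' x) x)
    (s : ℝ) : HasDerivAt (periodize p φ) (periodize p φ' s) s := by
  obtain ⟨m, hm⟩ := exists_eventually_periodize_eq hp hab s
  rw [hm.self_of_nhds φ' hφ']
  exact ((hderiv _).comp_add_const s _).congr_of_eventuallyEq (hm.mono fun t ht => ht φ hφ)

theorem continuous_periodize (hcont : Continuous φ) : Continuous (periodize p φ) :=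
  continuous_iff_continuousAt.2 fun s => by
    obtain ⟨m, hm⟩ := exists_eventually_periodize_eq hp hab s
    exact (hcont.comp (continuous_add_const _)).continuousAt.congr
      (hm.mono fun t ht => (ht φ hφ).symm)

theorem abs_periodize_le {B : ℝ} (hB : ∀ x, |φ x| ≤ B) (s : ℝ) : |periodize p φ s| ≤ B := by
  obtain ⟨m, hm⟩ := exists_eventually_periodize_eq hp hab s
  rw [hm.self_of_nhds φ hφ]
  exact hB _

end Periodize

theorem contDiff_two_of_hasDerivAt {f f' f'' : ℝ → ℝ} (hf : ∀ x, HasDerivAt f (f' x) x)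
    (hf' : ∀ x, HasDerivAt f' (f'' x) x) (hf'' : Continuous f'') : ContDiff ℝ 2 f := by
  have e : deriv f = f' := funext fun x => (hf x).deriv
  have e' : deriv f' = f'' := funext fun x => (hf' x).deriv
  rw [show (2 : WithTop ℕ∞) = 1 + 1 from rfl, contDiff_succ_iff_deriv, e, contDiff_one_iff_deriv,
    e']
  exact ⟨fun x => (hf x).differentiableAt, by simp, fun x => (hf' x).differentiableAt, hf''⟩

theorem two_sub_zero_lt_two_pi : (2 : ℝ) - 0 < 2 * π := by linarith [pi_gt_three]

def radial (d : ℕ → ℝ) (s : ℝ) : ℝ := 1 + periodize (2 * π) (perturbation d) s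

section Radial

variable {d : ℕ → ℝ} {ε : ℝ}

theorem periodic_radial : Periodic (radial d) (2 * π) := fun s => by
  simp only [radial, periodic_periodize _ _ s]

theorem radial_xi {k : ℕ} (hk : k ≠ 0) : radial d (xi k) = 1 := by
  rw [radial, periodize_eq_of_mem support_perturbation two_sub_zero_lt_two_pi
    ⟨xi_nonneg k, by linarith [xi_le_one k]⟩, perturbation_xi hk, add_zero]

variable (hd : ∀ k, |d k| ≤ ε * xi k ^ 4)
include hd

theorem hasDerivAt_radial (s : ℝ) :
    HasDerivAt (radial d) (periodize (2 * π) (perturbationDeriv d) s) s :=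
  (hasDerivAt_periodize two_pi_pos two_sub_zero_lt_two_pi support_perturbation
    (support_perturbationDeriv (eq_zero_of_abs_le_mul_xi_pow hd)) (hasDerivAt_perturbation hd)
    s).const_add 1

theorem hasDerivAt_periodize_perturbationDeriv (s : ℝ) :
    HasDerivAt (periodize (2 * π) (perturbationDeriv d))
      (periodize (2 * π) (perturbationDeriv2 d) s) s :=
  hasDerivAt_periodize two_pi_pos two_sub_zero_lt_two_pi
    (support_perturbationDeriv (eq_zero_of_abs_le_mul_xi_pow hd)) support_perturbationDeriv2
    (hasDerivAt_perturbationDeriv hd) s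

theorem contDiff_radial : ContDiff ℝ 2 (radial d) :=
  contDiff_two_of_hasDerivAt (hasDerivAt_radial hd) (hasDerivAt_periodize_perturbationDeriv hd)
    (continuous_periodize two_pi_pos two_sub_zero_lt_two_pi support_perturbationDeriv2
      (continuous_perturbationDeriv2 hd))

theorem hasDerivAt_radial_xi {k : ℕ} (hk : k ≠ 0) : HasDerivAt (radial d) (d k) (xi k) := by
  have hd0 := eq_zero_of_abs_le_mul_xi_pow hd
  convert hasDerivAt_radial hd (xi k) using 1
  rw [periodize_eq_of_mem (support_perturbationDeriv hd0) two_sub_zero_lt_two_pi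
    ⟨xi_nonneg k, by linarith [xi_le_one k]⟩, perturbationDeriv_xi hd0 hk]

end Radial

theorem curvature_numerator_pos {u v w : ℝ} (hu : |u| ≤ 1 / 10) (hw : |w| ≤ 1 / 10) :
    0 < (1 + u) ^ 2 + 2 * v ^ 2 - (1 + u) * w := by
  obtain ⟨hu₁, hu₂⟩ := abs_le.1 hu
  obtain ⟨hw₁, hw₂⟩ := abs_le.1 hw
  nlinarith [sq_nonneg v]

theorem exists_convex_radial_interpolant : ∃ ε > 0, ∀ d : ℕ → ℝ, (∀ k, |d k| ≤ ε * xi k ^ 4) →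
    ∃ ρ : ℝ → ℝ, Periodic ρ (2 * π) ∧ (∀ s, 0 < ρ s) ∧ ContDiff ℝ 2 ρ ∧
      (∀ s, 0 < ρ s ^ 2 + 2 * deriv ρ s ^ 2 - ρ s * deriv (deriv ρ) s) ∧
      ∀ k, k ≠ 0 → ρ (xi k) = 1 ∧ HasDerivAt ρ (d k) (xi k) := by
  obtain ⟨C, hC⟩ := exists_abs_perturbation_le
  refine ⟨1 / (10 * max C 1), by positivity, fun d hd => ?_⟩
  have hCε : C * (1 / (10 * max C 1)) ≤ 1 / 10 := by
    rw [mul_one_div, div_le_div_iff₀ (by positivity) (by norm_num)]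
    nlinarith [le_max_left C 1]
  have hbound (s : ℝ) : |periodize (2 * π) (perturbation d) s| ≤ 1 / 10 ∧
      |periodize (2 * π) (perturbationDeriv2 d) s| ≤ 1 / 10 :=
    ⟨abs_periodize_le two_pi_pos two_sub_zero_lt_two_pi support_perturbation
      (fun t => (hC hd t).1.trans hCε) s,
    abs_periodize_le two_pi_pos two_sub_zero_lt_two_pi support_perturbationDeriv2
      (fun t => (hC hd t).2.trans hCε) s⟩
  have hderiv2 : deriv (deriv (radial d)) = periodize (2 * π) (perturbationDeriv2 d) := by
    rw [funext fun s => (hasDerivAt_radial hd s).deriv]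
    exact funext fun s => (hasDerivAt_periodize_perturbationDeriv hd s).deriv
  refine ⟨radial d, periodic_radial, fun s => ?_, contDiff_radial hd,
    fun s => hderiv2 ▸ curvature_numerator_pos (hbound s).1 (hbound s).2,
    fun k hk => ⟨radial_xi hk, hasDerivAt_radial_xi hd hk⟩⟩
  have := abs_le.1 (hbound s).1
  simp only [radial]
  linarith

theorem cos_pos_of_abs_le_one {x : ℝ} (h : |x| ≤ 1) : 0 < cos x := by
  obtain ⟨h₁, h₂⟩ := abs_le.1 h
  exact cos_pos_of_mem_Ioo ⟨by linarith [pi_gt_three], by linarith [pi_gt_three]⟩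

theorem abs_tan_le_two_mul_abs {x : ℝ} (h : |x| ≤ 1) : |tan x| ≤ 2 * |x| := by
  have hcos : 1 / 2 ≤ cos x := by
    nlinarith [one_sub_sq_div_two_le_cos (x := x), sq_abs x, abs_nonneg x]
  rw [tan_eq_sin_div_cos, abs_div, abs_of_pos (show 0 < cos x by linarith),
    div_le_iff₀ (by linarith)]
  nlinarith [abs_sin_le_abs (x := x), abs_nonneg x]

theorem exists_small_angle {σ : ℕ → ℝ} {b : ℝ}
    (hσ : Tendsto (fun k : ℕ => (k : ℝ) ^ ((5 : ℝ) / 2) * |σ k|) atTop (𝓝 b)) {ε : ℝ}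
    (hε : 0 < ε) :
    ∃ k₀ : ℕ, 0 < k₀ ∧ ∀ k, k₀ ≤ k → 0 < cos (σ k) ∧ |tan (σ k)| ≤ ε * xi k ^ 4 := by
  set ε' := min ε 1 / 2
  have hε' : 0 < ε' := by positivity
  have hlim : Tendsto (fun k : ℕ => (k : ℝ) ^ ((5 : ℝ) / 2) * |σ k| * xi k) atTop (𝓝 0) := by
    simpa using hσ.mul tendsto_xi
  obtain ⟨k₀, hk₀⟩ := eventually_atTop.1
    ((hlim.eventually (Iic_mem_nhds hε')).and (eventually_gt_atTop 0))
  refine ⟨k₀, (hk₀ k₀ le_rfl).2, fun k hk => ?_⟩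
  obtain ⟨hsmall, hk0⟩ := hk₀ k hk
  have hσk : |σ k| ≤ ε' * xi k ^ 4 := by
    calc |σ k| = (k : ℝ) ^ ((5 : ℝ) / 2) * |σ k| * xi k * xi k ^ 4 := by
          linear_combination (-|σ k|) * rpow_mul_xi_pow_five hk0.ne'
      _ ≤ ε' * xi k ^ 4 := by gcongr
  have hx4 : xi k ^ 4 ≤ 1 := pow_le_one₀ (xi_nonneg k) (xi_le_one k)
  have hε'1 : ε' ≤ 1 / 2 := by simp only [ε']; linarith [min_le_right ε 1]
  have hσ1 : |σ k| ≤ 1 := hσk.trans (by nlinarith)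
  refine ⟨cos_pos_of_abs_le_one hσ1, ?_⟩
  calc |tan (σ k)| ≤ 2 * |σ k| := abs_tan_le_two_mul_abs hσ1
    _ ≤ 2 * (ε' * xi k ^ 4) := by gcongr
    _ = min ε 1 * xi k ^ 4 := by ring
    _ ≤ ε * xi k ^ 4 := by gcongr; exact min_le_left _ _

theorem polar_normal_eq {ρ : ℝ → ℝ} {x σ : ℝ} (hρ : HasDerivAt ρ (-tan σ) x) (h1 : ρ x = 1)
    (hσ : 0 < cos σ) :
    (√(ρ x ^ 2 + deriv ρ x ^ 2))⁻¹ •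
        (-deriv (fun s => ρ s * sin s) x, deriv (fun s => ρ s * cos s) x) =
      (cos σ * -cos x + sin σ * sin x, cos σ * -sin x + sin σ * -cos x) := by
  rw [(hρ.fun_mul (hasDerivAt_sin x)).deriv, (hρ.fun_mul (hasDerivAt_cos x)).deriv, hρ.deriv, h1,
    one_pow, neg_sq, inv_sqrt_one_add_tan_sq hσ, tan_eq_sin_div_cos]
  ext <;> simp only [Prod.smul_fst, Prod.smul_snd, smul_eq_mul] <;> field_simp <;> ring

end Halpern

open Halpern in
theorem stmt_13_general (ξ : ℕ → ℝ) (hξ : ∀ k : ℕ, ξ k = (k : ℝ) ^ (-(1 : ℝ) / 2))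
    (w : ℕ → ℝ × ℝ) (σ : ℕ → ℝ) (b : ℝ)
    -- `w k = cos σ_k • z_k + sin σ_k • z̃_k`, where `z_k = −q_k` and `z̃_k` is `z_k`
    -- rotated counterclockwise by `π/2`
    (hw : ∀ k : ℕ, 1 ≤ k → w k =
      (Real.cos (σ k) * (-Real.cos (ξ k)) + Real.sin (σ k) * Real.sin (ξ k),
       Real.cos (σ k) * (-Real.sin (ξ k)) + Real.sin (σ k) * (-Real.cos (ξ k))))
    -- `|σ_k| = b_k k^{-5/2}` with `b_k → b`
    (hσ : Tendsto (fun k : ℕ => (k : ℝ) ^ ((5 : ℝ) / 2) * |σ k|) atTop (nhds b)) :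
    ∃ k₀ : ℕ, 0 < k₀ ∧ ∃ ρ : ℝ → ℝ,
      Function.Periodic ρ (2 * π) ∧
      (∀ s : ℝ, 0 < ρ s) ∧
      ContDiff ℝ 2 ρ ∧
      -- everywhere positive curvature of the curve `r = ρ(ξ)`
      (∀ s : ℝ, 0 < (ρ s) ^ 2 + 2 * (deriv ρ s) ^ 2 - ρ s * deriv (deriv ρ) s) ∧
      ∀ k : ℕ, k₀ ≤ k →
        ρ (ξ k) = 1 ∧
        w k = (Real.sqrt ((ρ (ξ k)) ^ 2 + (deriv ρ (ξ k)) ^ 2))⁻¹ •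
          (-(deriv (fun s : ℝ => ρ s * Real.sin s) (ξ k)),
            deriv (fun s : ℝ => ρ s * Real.cos s) (ξ k)) := by
  obtain rfl : ξ = xi := funext hξ
  obtain ⟨ε, hε, hinterp⟩ := exists_convex_radial_interpolant
  obtain ⟨k₀, hk₀, hsmall⟩ := exists_small_angle hσ hε
  set d : ℕ → ℝ := fun k => if k₀ ≤ k then -tan (σ k) else 0
  have hd (k : ℕ) : |d k| ≤ ε * xi k ^ 4 := by
    by_cases hk : k₀ ≤ k
    · simpa [d, hk] using (hsmall k hk).2
    · simp only [d, if_neg hk, abs_zero]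
      exact mul_nonneg hε.le (by positivity)
  obtain ⟨ρ, hper, hpos, hρ, hcurv, hval⟩ := hinterp d hd
  refine ⟨k₀, hk₀, ρ, hper, hpos, hρ, hcurv, fun k hk => ?_⟩
  obtain ⟨hρk, hρ'k⟩ := hval k (by omega)
  simp only [d, if_pos hk] at hρ'k
  exact ⟨hρk, by rw [hw k (by omega), polar_normal_eq hρ'k hρk (hsmall k hk).1]⟩

/-- **Halpern's lemma.** Let `q_k = (cos ξ_k, sin ξ_k)` with `ξ_k = k^{-1/2}`, and let unit
vectors `w_k` at `q_k` make oriented angles `σ_k` with the inward normals `z_k = −q_k` of the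
unit circle, with `|σ_k| = b_k k^{-5/2}` and `b_k → b > 0`. Then there are `k₀ > 0` and a
`2π`-periodic positive `C²` function `ρ` whose polar curve `γ(ξ) = ρ(ξ)(cos ξ, sin ξ)` has
everywhere positive curvature (hence is strictly convex), passes through `q_k` for all
`k ≥ k₀` (i.e. `ρ(ξ_k) = 1`), and has inward unit normal `w_k` at `q_k` for all `k ≥ k₀`. -/
theorem stmt_13 (ξ : ℕ → ℝ) (hξ : ∀ k : ℕ, ξ k = (k : ℝ) ^ (-(1 : ℝ) / 2))
    (w : ℕ → ℝ × ℝ) (σ : ℕ → ℝ) (b : ℝ) (hb : 0 < b)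
    -- `w k = cos σ_k • z_k + sin σ_k • z̃_k`, where `z_k = −q_k` and `z̃_k` is `z_k`
    -- rotated counterclockwise by `π/2`
    (hw : ∀ k : ℕ, 1 ≤ k → w k =
      (Real.cos (σ k) * (-Real.cos (ξ k)) + Real.sin (σ k) * Real.sin (ξ k),
       Real.cos (σ k) * (-Real.sin (ξ k)) + Real.sin (σ k) * (-Real.cos (ξ k))))
    -- `|σ_k| = b_k k^{-5/2}` with `b_k → b`
    (hσ : Tendsto (fun k : ℕ => (k : ℝ) ^ ((5 : ℝ) / 2) * |σ k|) atTop (nhds b)) :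
    ∃ k₀ : ℕ, 0 < k₀ ∧ ∃ ρ : ℝ → ℝ,
      Function.Periodic ρ (2 * π) ∧
      (∀ s : ℝ, 0 < ρ s) ∧
      ContDiff ℝ 2 ρ ∧
      -- everywhere positive curvature of the curve `r = ρ(ξ)`
      (∀ s : ℝ, 0 < (ρ s) ^ 2 + 2 * (deriv ρ s) ^ 2 - ρ s * deriv (deriv ρ) s) ∧
      ∀ k : ℕ, k₀ ≤ k →
        ρ (ξ k) = 1 ∧
        w k = (Real.sqrt ((ρ (ξ k)) ^ 2 + (deriv ρ (ξ k)) ^ 2))⁻¹ •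
          (-(deriv (fun s : ℝ => ρ s * Real.sin s) (ξ k)),
            deriv (fun s : ℝ => ρ s * Real.cos s) (ξ k)) :=
  stmt_13_general ξ hξ w σ b hw hσ
end
end

section
/- Let f₁ : (−1,1) → ℝ be a positive C² function with f₁(s) = √(1 − s²) for s ∈ (−1, 0] ∪ [1/3, 1), and such that on (0, 1/3): f₁''(s) < 0 and |f₁''(s)|/(1 + f₁'(s)²)^{3/2} > 1/2. Then f₁(s)·f₁''(s) + f₁'(s)² < 0 for all s ∈ (−1, 1). -/
open Real

noncomputable section

/-- If two functions agree eventually along a nontrivial filter below `𝓝 x` and both are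
continuous at `x`, they agree at `x`. -/
lemma stmt_16_aux {H L : ℝ → ℝ} {x : ℝ} {l : Filter ℝ} [l.NeBot]
    (hle : l ≤ nhds x) (hH : ContinuousAt H x) (hL : ContinuousAt L x)
    (heq : ∀ᶠ t in l, H t = L t) : H x = L x :=
  tendsto_nhds_unique (hH.tendsto.mono_left hle)
    ((hL.tendsto.mono_left hle).congr' (heq.mono fun _ h => h.symm))

/-- For the `C²` function `f₁` coinciding with the circle graph `s ↦ √(1 − s²)` on
`(−1,0] ∪ [1/3,1)`, concave on `(0,1/3)` with curvature exceeding `1/2` there, one has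
`f₁·f₁'' + f₁'² < 0` on all of `(−1,1)`. -/
theorem stmt_16 (f f' f'' : ℝ → ℝ)
    (hd1 : ∀ s ∈ Set.Ioo (-1 : ℝ) 1, HasDerivAt f (f' s) s)
    (hd2 : ∀ s ∈ Set.Ioo (-1 : ℝ) 1, HasDerivAt f' (f'' s) s)
    (hcont : ContinuousOn f'' (Set.Ioo (-1 : ℝ) 1))
    (hpos : ∀ s ∈ Set.Ioo (-1 : ℝ) 1, 0 < f s)
    (hcirc : ∀ s ∈ Set.Ioo (-1 : ℝ) 1, s ≤ 0 ∨ 1 / 3 ≤ s → f s = Real.sqrt (1 - s ^ 2))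
    (hconc : ∀ s ∈ Set.Ioo (0 : ℝ) (1 / 3), f'' s < 0)
    (hcurv : ∀ s ∈ Set.Ioo (0 : ℝ) (1 / 3),
      1 / 2 < |f'' s| / (1 + (f' s) ^ 2) ^ ((3 : ℝ) / 2)) :
    ∀ s ∈ Set.Ioo (-1 : ℝ) 1, f s * f'' s + (f' s) ^ 2 < 0 := by
  have h0mem : (0 : ℝ) ∈ Set.Ioo (-1 : ℝ) 1 := by norm_num
  have h13mem : (1/3 : ℝ) ∈ Set.Ioo (-1 : ℝ) 1 := by norm_num
  -- squares on the closed circle region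
  have hsq : ∀ t ∈ Set.Ioo (-1 : ℝ) 1, (t ≤ 0 ∨ 1/3 ≤ t) → f t ^ 2 = 1 - t ^ 2 := by
    intro t ht hside
    rw [hcirc t ht hside]
    exact Real.sq_sqrt (by nlinarith [ht.1, ht.2])
  -- f * f' = -t on the open circle region
  have hg : ∀ t ∈ Set.Ioo (-1 : ℝ) 1, (t < 0 ∨ 1/3 < t) → f t * f' t = -t := by
    intro t ht hside
    have heq : ∀ᶠ u in nhds t, f u ^ 2 = 1 - u ^ 2 := by
      rcases hside with h | h
      · filter_upwards [isOpen_Ioo.mem_nhds (show t ∈ Set.Ioo (-1:ℝ) 0 from ⟨ht.1, h⟩)]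
          with u hu
        exact hsq u ⟨hu.1, by linarith [hu.2]⟩ (Or.inl hu.2.le)
      · filter_upwards [isOpen_Ioo.mem_nhds (show t ∈ Set.Ioo (1/3:ℝ) 1 from ⟨h, ht.2⟩)]
          with u hu
        exact hsq u ⟨by linarith [hu.1], hu.2⟩ (Or.inr hu.1.le)
    have h2 : HasDerivAt (fun u => f u ^ 2) (2 * f t ^ 1 * f' t) t := (hd1 t ht).pow 2
    have h3 : HasDerivAt (fun u => 1 - u ^ 2) (2 * f t ^ 1 * f' t) t :=
      h2.congr_of_eventuallyEq (heq.mono fun u hu => hu.symm)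
    have h4 : HasDerivAt (fun u : ℝ => 1 - u ^ 2) (-(2 * t ^ 1)) t :=
      (hasDerivAt_pow 2 t).const_sub 1
    have := h3.unique h4
    simp only [pow_one] at this
    linarith
  -- f f'' + f'^2 = -1 on the open circle region
  have key : ∀ s ∈ Set.Ioo (-1 : ℝ) 1, (s < 0 ∨ 1/3 < s) →
      f s * f'' s + f' s ^ 2 = -1 := by
    intro s hs hside
    have heq : ∀ᶠ t in nhds s, f t * f' t = -t := by
      rcases hside with h | h
      · filter_upwards [isOpen_Ioo.mem_nhds (show s ∈ Set.Ioo (-1:ℝ) 0 from ⟨hs.1, h⟩)]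
          with u hu
        exact hg u ⟨hu.1, by linarith [hu.2]⟩ (Or.inl hu.2)
      · filter_upwards [isOpen_Ioo.mem_nhds (show s ∈ Set.Ioo (1/3:ℝ) 1 from ⟨h, hs.2⟩)]
          with u hu
        exact hg u ⟨by linarith [hu.1], hu.2⟩ (Or.inr hu.1)
    have hprod : HasDerivAt (fun t => f t * f' t) (f' s * f' s + f s * f'' s) s :=
      (hd1 s hs).mul (hd2 s hs)
    have h3 : HasDerivAt (fun t : ℝ => -t) (f' s * f' s + f s * f'' s) s :=
      hprod.congr_of_eventuallyEq (heq.mono fun u hu => hu.symm)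
    have h4 : HasDerivAt (fun t : ℝ => -t) (-1 : ℝ) s := (hasDerivAt_id s).neg
    have := h3.unique h4
    nlinarith [sq_nonneg (f' s)]
  -- continuity facts
  have hcFat : ∀ x ∈ Set.Ioo (-1:ℝ) 1,
      ContinuousAt (fun t => f t * f'' t + f' t ^ 2) x := by
    intro x hx
    exact ((hd1 x hx).continuousAt.mul
      (hcont.continuousAt (isOpen_Ioo.mem_nhds hx))).add ((hd2 x hx).continuousAt.pow 2)
  have hcGat : ∀ x ∈ Set.Ioo (-1:ℝ) 1, ContinuousAt (fun t => f t * f' t) x := by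
    intro x hx
    exact (hd1 x hx).continuousAt.mul (hd2 x hx).continuousAt
  -- boundary values via limits
  have hev0 : ∀ᶠ t in nhdsWithin (0:ℝ) (Set.Iio 0), t ∈ Set.Ioo (-1:ℝ) 1 ∧ t < 0 := by
    filter_upwards [self_mem_nhdsWithin,
      (eventually_gt_nhds (show (-1:ℝ) < 0 by norm_num)).filter_mono nhdsWithin_le_nhds]
      with t ht1 ht2
    exact ⟨⟨ht2, by linarith [Set.mem_Iio.mp ht1]⟩, ht1⟩
  have hev13 : ∀ᶠ t in nhdsWithin (1/3:ℝ) (Set.Ioi (1/3)),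
      t ∈ Set.Ioo (-1:ℝ) 1 ∧ 1/3 < t := by
    filter_upwards [self_mem_nhdsWithin,
      (eventually_lt_nhds (show (1/3:ℝ) < 1 by norm_num)).filter_mono nhdsWithin_le_nhds]
      with t ht1 ht2
    exact ⟨⟨by linarith [Set.mem_Ioi.mp ht1], ht2⟩, ht1⟩
  have hF0 : f 0 * f'' 0 + f' 0 ^ 2 = -1 := by
    have := stmt_16_aux (l := nhdsWithin (0:ℝ) (Set.Iio 0)) nhdsWithin_le_nhds
      (hcFat 0 h0mem) continuousAt_const
      (hev0.mono fun t ht => key t ht.1 (Or.inl ht.2))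
    simpa using this
  have hF13 : f (1/3) * f'' (1/3) + f' (1/3) ^ 2 = -1 := by
    have := stmt_16_aux (l := nhdsWithin (1/3:ℝ) (Set.Ioi (1/3))) nhdsWithin_le_nhds
      (hcFat (1/3) h13mem) continuousAt_const
      (hev13.mono fun t ht => key t ht.1 (Or.inr ht.2))
    simpa using this
  have hG0 : f 0 * f' 0 = 0 := by
    have := stmt_16_aux (l := nhdsWithin (0:ℝ) (Set.Iio 0)) nhdsWithin_le_nhds
      (hcGat 0 h0mem) (continuousAt_id.neg)
      (hev0.mono fun t ht => hg t ht.1 (Or.inl ht.2))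
    simpa using this
  have hG13 : f (1/3) * f' (1/3) = -(1/3) := by
    have := stmt_16_aux (l := nhdsWithin (1/3:ℝ) (Set.Ioi (1/3))) nhdsWithin_le_nhds
      (hcGat (1/3) h13mem) (continuousAt_id.neg)
      (hev13.mono fun t ht => hg t ht.1 (Or.inr ht.2))
    simpa using this
  -- values at 0 and 1/3
  have hf0 : f 0 = 1 := by
    have := hcirc 0 h0mem (Or.inl le_rfl); simpa using this
  have hf'0 : f' 0 = 0 := by rw [hf0, one_mul] at hG0; exact hG0
  have hf13sq : f (1/3) ^ 2 = 8/9 := by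
    have := hsq (1/3) h13mem (Or.inr le_rfl); norm_num at this ⊢; linarith
  have hf13pos : 0 < f (1/3) := hpos (1/3) h13mem
  have hf'13sq : f' (1/3) ^ 2 = 1/8 := by
    have h := congrArg (· ^ 2) hG13
    simp only [mul_pow] at h
    rw [hf13sq] at h
    norm_num at h
    linarith
  -- monotonicity on [0, 1/3]
  have hsub : Set.Icc (0:ℝ) (1/3) ⊆ Set.Ioo (-1:ℝ) 1 := by
    intro x hx; exact ⟨by linarith [hx.1], by linarith [hx.2]⟩
  have hf'anti : StrictAntiOn f' (Set.Icc (0:ℝ) (1/3)) := by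
    apply strictAntiOn_of_deriv_neg (convex_Icc _ _)
    · exact fun x hx => ((hd2 x (hsub hx)).continuousAt).continuousWithinAt
    · intro x hx
      rw [interior_Icc] at hx
      rw [(hd2 x (hsub ⟨hx.1.le, hx.2.le⟩)).deriv]
      exact hconc x hx
  have hf'neg : ∀ s ∈ Set.Ioo (0:ℝ) (1/3), f' s < 0 := by
    intro s hs
    have := hf'anti (Set.left_mem_Icc.mpr (by norm_num)) ⟨hs.1.le, hs.2.le⟩ hs.1
    rwa [hf'0] at this
  have hfanti : StrictAntiOn f (Set.Icc (0:ℝ) (1/3)) := by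
    apply strictAntiOn_of_deriv_neg (convex_Icc _ _)
    · exact fun x hx => ((hd1 x (hsub hx)).continuousAt).continuousWithinAt
    · intro x hx
      rw [interior_Icc] at hx
      rw [(hd1 x (hsub ⟨hx.1.le, hx.2.le⟩)).deriv]
      exact hf'neg x hx
  -- main case split
  intro s hs
  rcases lt_trichotomy s 0 with h | h | h
  · have := key s hs (Or.inl h); linarith
  · subst h; rw [hF0]; norm_num
  · rcases lt_trichotomy s (1/3) with h' | h' | h'
    · -- middle region
      have hsmem : s ∈ Set.Ioo (0:ℝ) (1/3) := ⟨h, h'⟩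
      have hmemIcc : s ∈ Set.Icc (0:ℝ) (1/3) := ⟨h.le, h'.le⟩
      have h13Icc : (1/3:ℝ) ∈ Set.Icc (0:ℝ) (1/3) := Set.right_mem_Icc.mpr (by norm_num)
      have hc1 : f' (1/3) < f' s := hf'anti hmemIcc h13Icc h'
      have hc0 : f' s < 0 := hf'neg s hsmem
      have hc2 : f' s ^ 2 < 1/8 := by nlinarith
      have hfs : f (1/3) < f s := hfanti hmemIcc h13Icc h'
      have h094 : (0.94 : ℝ) < f s := by nlinarith
      -- curvature bound
      have hD1 : (1:ℝ) ≤ (1 + f' s ^ 2) ^ ((3:ℝ)/2) := by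
        have h1 : (1:ℝ) ^ ((3:ℝ)/2) ≤ (1 + f' s ^ 2) ^ ((3:ℝ)/2) :=
          Real.rpow_le_rpow zero_le_one (by nlinarith [sq_nonneg (f' s)]) (by norm_num)
        rwa [Real.one_rpow] at h1
      have hDpos : (0:ℝ) < (1 + f' s ^ 2) ^ ((3:ℝ)/2) := by linarith
      have habs : |f'' s| = -f'' s := abs_of_neg (hconc s hsmem)
      have hcurvs := hcurv s hsmem
      rw [habs, lt_div_iff₀ hDpos] at hcurvs
      have hb : 1/2 < -f'' s := by nlinarith
      nlinarith [mul_lt_mul'' h094 hb (by norm_num : (0:ℝ) ≤ 0.94) (by norm_num : (0:ℝ) ≤ 1/2)]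
    · subst h'; rw [hF13]; norm_num
    · have := key s hs (Or.inr h'); linarith
end
end

section
/- Let K_e = {(x¹,x²,x³) ∈ ℝ³ : (x³)² = (x¹)²/a² + (x²)²/b², x³ > 0} with a > b > 0. Let p₁ ≠ p₂ ∈ K_e, v = (p₂ − p₁)/‖p₂ − p₁‖, and let m₁₂, I₁, I₂ be computed at (p₂, v) (equivalently at any point of the line through p₁, p₂). Assume I₁ > 0 and I₂ > 0. Then sin² ∠p₁Op₂ = 4a²b²I₁I₂ / ( 4a²b²I₁I₂ + ( (1+a²)(1+b²)m₁₂² − (a²b²I₁ − I₂) )² ). Moreover a²I₁ − I₂ = (a² − b²)m₁₃² + (a² + 1)m₁₂², so that m₁₂² ≤ (a²I₁ − I₂)/(a² + 1). -/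
open Real
open scoped RealInnerProductSpace

noncomputable section

/-!
Relative to the Plücker coordinates `mᵢⱼ(p₁, p₂)` of the cross product `p₁ × p₂`, those at
`(p₂, v)` are scaled by `‖p₂ - p₁‖⁻¹`, and the closed form is invariant under this scaling.
For `p₁ × p₂`, Lagrange's identity gives `sin² ∠p₁Op₂ = I₁ / (I₁ + ⟪p₁, p₂⟫²)`. Let `B` be the
polar form of the cone, scaled by `a²b²`. The polarized Cauchy–Binet identity for the adjugate,
together with `B(p, p) = 0` on the cone, gives `a²b² I₂ = B(p₁, p₂)²` and
`(1 + a²)(1 + b²) m₁₂² − (a²b² I₁ − I₂) = −2 B(p₁, p₂) ⟪p₁, p₂⟫`; substituting both turns the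
closed form into `I₁ / (I₁ + ⟪p₁, p₂⟫²)`.
-/

open InnerProductGeometry

section Plucker

variable (p q : EuclideanSpace ℝ (Fin 3)) (t : ℝ)

lemma m12_smul_sub : m12 q (t • (q - p)) = t * m12 p q := by
  simp only [m12, PiLp.smul_apply, PiLp.sub_apply, smul_eq_mul]; ring

lemma m13_smul_sub : m13 q (t • (q - p)) = t * m13 p q := by
  simp only [m13, PiLp.smul_apply, PiLp.sub_apply, smul_eq_mul]; ring

lemma m23_smul_sub : m23 q (t • (q - p)) = t * m23 p q := by
  simp only [m23, PiLp.smul_apply, PiLp.sub_apply, smul_eq_mul]; ring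

lemma I1_smul_sub : I1 q (t • (q - p)) = t ^ 2 * I1 p q := by
  simp only [I1, m12_smul_sub, m13_smul_sub, m23_smul_sub]; ring

lemma I2_smul_sub (a b : ℝ) : I2 a b q (t • (q - p)) = t ^ 2 * I2 a b p q := by
  simp only [I2, m12_smul_sub, m13_smul_sub, m23_smul_sub]; ring

lemma a_sq_mul_I1_sub_I2 (a b : ℝ) :
    a ^ 2 * I1 p q - I2 a b p q = (a ^ 2 - b ^ 2) * m13 p q ^ 2 + (a ^ 2 + 1) * m12 p q ^ 2 := by
  simp only [I1, I2]; ring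

lemma m12_sq_le {a b : ℝ} (h : b ^ 2 ≤ a ^ 2) :
    m12 p q ^ 2 ≤ (a ^ 2 * I1 p q - I2 a b p q) / (a ^ 2 + 1) := by
  rw [a_sq_mul_I1_sub_I2, le_div_iff₀ (by positivity)]
  nlinarith [mul_nonneg (sub_nonneg.2 h) (sq_nonneg (m13 p q))]

end Plucker

def diagForm (d : Fin 3 → ℝ) (x y : EuclideanSpace ℝ (Fin 3)) : ℝ := ∑ i, d i * x i * y i

/-- Polarized Cauchy–Binet: `(m₂₃, -m₁₃, m₁₂)` is the cross product `x × y`, and the left side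
is the mixed adjugate form of `diag d` and `diag e` evaluated on it. -/
lemma diagForm_mixed_adjugate (d e : Fin 3 → ℝ) (x y : EuclideanSpace ℝ (Fin 3)) :
    (d 1 * e 2 + d 2 * e 1) * m23 x y ^ 2 + (d 0 * e 2 + d 2 * e 0) * m13 x y ^ 2 +
        (d 0 * e 1 + d 1 * e 0) * m12 x y ^ 2 =
      diagForm d x x * diagForm e y y + diagForm e x x * diagForm d y y -
        2 * diagForm d x y * diagForm e x y := by
  simp only [diagForm, m12, m13, m23, Fin.sum_univ_three]; ring

lemma diagForm_one (x y : EuclideanSpace ℝ (Fin 3)) : diagForm 1 x y = ⟪x, y⟫ := by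
  simp only [diagForm, Pi.one_apply, one_mul, Fin.sum_univ_three, PiLp.inner_apply,
    RCLike.inner_apply, ringHom_apply]
  ring

lemma I1_eq_norm_sq_mul_norm_sq_sub_inner_sq (x y : EuclideanSpace ℝ (Fin 3)) :
    I1 x y = ‖x‖ ^ 2 * ‖y‖ ^ 2 - ⟪x, y⟫ ^ 2 := by
  have h := diagForm_mixed_adjugate 1 1 x y
  simp only [diagForm_one, real_inner_self_eq_norm_sq, Pi.one_apply] at h
  rw [I1]; linarith

lemma sin_sq_angle_eq {x y : EuclideanSpace ℝ (Fin 3)} (hx : x ≠ 0) (hy : y ≠ 0) :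
    sin (angle x y) ^ 2 = I1 x y / (I1 x y + ⟪x, y⟫ ^ 2) := by
  rw [sin_sq, cos_angle, I1_eq_norm_sq_mul_norm_sq_sub_inner_sq, sub_add_cancel, div_pow, mul_pow]
  field_simp

section Cone

variable {a b : ℝ} {x y : EuclideanSpace ℝ (Fin 3)}

/-- `a²b²` times the quadratic form `(x¹)²/a² + (x²)²/b² − (x³)²` of the cone. -/
def coneWeights (a b : ℝ) : Fin 3 → ℝ := ![b ^ 2, a ^ 2, -(a ^ 2 * b ^ 2)]

lemma ne_zero_of_mem_Ke (hx : x ∈ Ke a b) : x ≠ 0 := by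
  rintro rfl
  simp [Ke] at hx

lemma diagForm_coneWeights_self (ha : a ≠ 0) (hb : b ≠ 0) (hx : x ∈ Ke a b) :
    diagForm (coneWeights a b) x x = 0 := by
  have h := hx.1
  field_simp at h
  simp only [diagForm, coneWeights, Fin.sum_univ_three, Matrix.cons_val_zero, Matrix.cons_val_one,
    Matrix.cons_val]
  linear_combination -h

lemma I2_eq_diagForm_sq (ha : a ≠ 0) (hb : b ≠ 0) (hx : x ∈ Ke a b) (hy : y ∈ Ke a b) :
    a ^ 2 * b ^ 2 * I2 a b x y = diagForm (coneWeights a b) x y ^ 2 := by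
  have h := diagForm_mixed_adjugate (coneWeights a b) (coneWeights a b) x y
  simp only [diagForm_coneWeights_self ha hb hx, diagForm_coneWeights_self ha hb hy] at h
  set B := diagForm (coneWeights a b) x y
  simp only [coneWeights, Matrix.cons_val_zero, Matrix.cons_val_one, Matrix.cons_val] at h
  rw [I2]; linear_combination -h / 2

lemma m12_sq_combination_eq (ha : a ≠ 0) (hb : b ≠ 0) (hx : x ∈ Ke a b) (hy : y ∈ Ke a b) :
    (1 + a ^ 2) * (1 + b ^ 2) * m12 x y ^ 2 - (a ^ 2 * b ^ 2 * I1 x y - I2 a b x y) =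
      -2 * diagForm (coneWeights a b) x y * ⟪x, y⟫ := by
  have h := diagForm_mixed_adjugate (coneWeights a b) 1 x y
  simp only [diagForm_coneWeights_self ha hb hx, diagForm_coneWeights_self ha hb hy,
    diagForm_one] at h
  set B := diagForm (coneWeights a b) x y
  simp only [coneWeights, Matrix.cons_val_zero, Matrix.cons_val_one, Matrix.cons_val,
    Pi.one_apply] at h
  rw [I1, I2]; linear_combination h

end Cone

def sinSqFormula (a b : ℝ) (x v : EuclideanSpace ℝ (Fin 3)) : ℝ :=
  4 * a ^ 2 * b ^ 2 * I1 x v * I2 a b x v /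
    (4 * a ^ 2 * b ^ 2 * I1 x v * I2 a b x v +
      ((1 + a ^ 2) * (1 + b ^ 2) * m12 x v ^ 2 - (a ^ 2 * b ^ 2 * I1 x v - I2 a b x v)) ^ 2)

lemma sinSqFormula_smul_sub (a b : ℝ) (p q : EuclideanSpace ℝ (Fin 3)) {t : ℝ} (ht : t ≠ 0) :
    sinSqFormula a b q (t • (q - p)) = sinSqFormula a b p q := by
  rw [sinSqFormula, sinSqFormula, I1_smul_sub, I2_smul_sub, m12_smul_sub, eq_comm,
    ← mul_div_mul_left _ _ (pow_ne_zero 4 ht)]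
  congr 1 <;> ring

lemma sin_sq_angle_eq_sinSqFormula {a b : ℝ} {x y : EuclideanSpace ℝ (Fin 3)} (ha : a ≠ 0)
    (hb : b ≠ 0) (hx : x ∈ Ke a b) (hy : y ∈ Ke a b) (hI2 : I2 a b x y ≠ 0) :
    sin (angle x y) ^ 2 = sinSqFormula a b x y := by
  have hB := I2_eq_diagForm_sq ha hb hx hy
  have hsq : (-2 * diagForm (coneWeights a b) x y * ⟪x, y⟫) ^ 2 =
      4 * a ^ 2 * b ^ 2 * I2 a b x y * ⟪x, y⟫ ^ 2 := by
    rw [mul_pow, mul_pow, ← hB]; ring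
  rw [sin_sq_angle_eq (ne_zero_of_mem_Ke hx) (ne_zero_of_mem_Ke hy), sinSqFormula,
    m12_sq_combination_eq ha hb hx hy, hsq, ← mul_div_mul_left _ _
      (by positivity : 4 * a ^ 2 * b ^ 2 * I2 a b x y ≠ 0)]
  congr 1 <;> ring

theorem stmt_18_general (a b : ℝ) (hab : b < a) (hb : 0 < b)
    (p₁ p₂ : EuclideanSpace ℝ (Fin 3)) (h₁ : p₁ ∈ Ke a b) (h₂ : p₂ ∈ Ke a b) (hne : p₁ ≠ p₂)
    (v : EuclideanSpace ℝ (Fin 3)) (hv : v = ‖p₂ - p₁‖⁻¹ • (p₂ - p₁))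
    (hI2 : 0 < I2 a b p₂ v) :
    Real.sin (InnerProductGeometry.angle p₁ p₂) ^ 2 =
        4 * a ^ 2 * b ^ 2 * I1 p₂ v * I2 a b p₂ v /
          (4 * a ^ 2 * b ^ 2 * I1 p₂ v * I2 a b p₂ v +
            ((1 + a ^ 2) * (1 + b ^ 2) * m12 p₂ v ^ 2 -
              (a ^ 2 * b ^ 2 * I1 p₂ v - I2 a b p₂ v)) ^ 2) ∧
      a ^ 2 * I1 p₂ v - I2 a b p₂ v =
        (a ^ 2 - b ^ 2) * m13 p₂ v ^ 2 + (a ^ 2 + 1) * m12 p₂ v ^ 2 ∧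
      m12 p₂ v ^ 2 ≤ (a ^ 2 * I1 p₂ v - I2 a b p₂ v) / (a ^ 2 + 1) := by
  have ha : 0 < a := hb.trans hab
  refine ⟨?_, a_sq_mul_I1_sub_I2 p₂ v a b, m12_sq_le p₂ v (pow_le_pow_left₀ hb.le hab.le 2)⟩
  have ht : ‖p₂ - p₁‖⁻¹ ≠ 0 := inv_ne_zero (norm_ne_zero_iff.2 (sub_ne_zero.2 hne.symm))
  rw [hv, I2_smul_sub] at hI2
  change _ = sinSqFormula a b p₂ v
  rw [hv, sinSqFormula_smul_sub a b p₁ p₂ ht]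
  exact sin_sq_angle_eq_sinSqFormula ha.ne' hb.ne' h₁ h₂ (right_ne_zero_of_mul hI2.ne')

/-- The explicit formula for `sin² ∠p₁Op₂` in terms of `I₁`, `I₂`, `m₁₂`, the identity
`a²I₁ − I₂ = (a² − b²)m₁₃² + (a² + 1)m₁₂²`, and the resulting bound on `m₁₂²`. -/
theorem stmt_18 (a b : ℝ) (hab : b < a) (hb : 0 < b)
    (p₁ p₂ : EuclideanSpace ℝ (Fin 3)) (h₁ : p₁ ∈ Ke a b) (h₂ : p₂ ∈ Ke a b) (hne : p₁ ≠ p₂)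
    (v : EuclideanSpace ℝ (Fin 3)) (hv : v = ‖p₂ - p₁‖⁻¹ • (p₂ - p₁))
    (hI1 : 0 < I1 p₂ v) (hI2 : 0 < I2 a b p₂ v) :
    Real.sin (InnerProductGeometry.angle p₁ p₂) ^ 2 =
        4 * a ^ 2 * b ^ 2 * I1 p₂ v * I2 a b p₂ v /
          (4 * a ^ 2 * b ^ 2 * I1 p₂ v * I2 a b p₂ v +
            ((1 + a ^ 2) * (1 + b ^ 2) * m12 p₂ v ^ 2 -
              (a ^ 2 * b ^ 2 * I1 p₂ v - I2 a b p₂ v)) ^ 2) ∧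
      a ^ 2 * I1 p₂ v - I2 a b p₂ v =
        (a ^ 2 - b ^ 2) * m13 p₂ v ^ 2 + (a ^ 2 + 1) * m12 p₂ v ^ 2 ∧
      m12 p₂ v ^ 2 ≤ (a ^ 2 * I1 p₂ v - I2 a b p₂ v) / (a ^ 2 + 1) :=
  stmt_18_general a b hab hb p₁ p₂ h₁ h₂ hne v hv hI2
end
end
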